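/- arXiv:1109.3273 — 4 statements merged into one kernel-verified Lean document; each statement's English description precedes it below -/
import Mathlib

section
/- Fix an integer r ≥ 1 and let g_r(x,y) = Σ_{n≥0} Σ_{p≥0} c_r(n,p) x^n y^p ∈ ℚ[[x,y]]. Then (2x²·g_r(x,y) - (1 - x + x^{r+2} - x^{r+2}y))² = (1 - x + x^{r+2} - x^{r+2}y)² - 4x² as formal power series in ℚ[[x,y]]. -/
/-- Steps of a Motzkin path: up, horizontal, down. -/
inductive Step : Type
  | U | H | D
  deriving DecidableEq

/-- A list of steps is a Motzkin path if every prefix has at least as many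
up steps as down steps, and the total numbers of up and down steps agree. -/
def IsMotzkin (l : List Step) : Prop :=
  (∀ k : ℕ, (l.take k).count Step.D ≤ (l.take k).count Step.U) ∧
    l.count Step.U = l.count Step.D

/-- The number of plateaus of length `r` (occurrences of a U step, then `r`
consecutive H steps, then a D step) in a path. -/
def plateauCountR (r : ℕ) (l : List Step) : ℕ :=
  ((Finset.range l.length).filter
    (fun i => (l.drop i).take (r + 2)
      = Step.U :: (List.replicate r Step.H ++ [Step.D]))).card

/-- `cR r n p` is the number of Motzkin paths of length `n` with exactly `p`
plateaus of length `r`; it is `0` when `n < 0` or `p < 0`. -/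
noncomputable def cR (r : ℕ) (n p : ℤ) : ℕ :=
  if 0 ≤ n ∧ 0 ≤ p then
    Nat.card {l : List Step // l.length = n.toNat ∧ IsMotzkin l ∧ plateauCountR r l = p.toNat}
  else 0

namespace MAux


def stepVal : Step → ℤ
  | .U => 1
  | .H => 0
  | .D => -1

def bal (l : List Step) : ℤ := (l.count Step.U : ℤ) - l.count Step.D

@[simp] lemma bal_nil : bal [] = 0 := by simp [bal]

@[simp] lemma bal_cons (s : Step) (t : List Step) : bal (s :: t) = stepVal s + bal t := by
  cases s <;> simp [bal, stepVal, List.count_cons] <;> ring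

@[simp] lemma bal_append (a b : List Step) : bal (a ++ b) = bal a + bal b := by
  simp [bal, List.count_append]; ring

def balOK : ℤ → List Step → Bool
  | _, [] => true
  | m, s :: t => (decide (0 ≤ m + stepVal s)) && balOK (m + stepVal s) t

lemma balOK_append (m : ℤ) (a b : List Step) :
    balOK m (a ++ b) = (balOK m a && balOK (m + bal a) b) := by
  induction a generalizing m with
  | nil => simp [balOK]
  | cons s t ih => simp [balOK, ih, Bool.and_assoc, add_assoc]

lemma balOK_iff (l : List Step) : ∀ m : ℤ, 0 ≤ m →
    (balOK m l = true ↔ ∀ k : ℕ, 0 ≤ m + bal (l.take k)) := by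
  induction l with
  | nil => intro m hm; simpa [balOK] using fun _ : ℕ => hm
  | cons s t ih =>
    intro m hm
    simp only [balOK, Bool.and_eq_true, decide_eq_true_eq]
    constructor
    · rintro ⟨h1, h2⟩ k
      cases k with
      | zero => simpa using hm
      | succ k =>
        simp only [List.take_succ_cons, bal_cons, ← add_assoc]
        exact ((ih _ h1).1 h2) k
    · intro h
      have h1 : 0 ≤ m + stepVal s := by have := h 1; simpa using this
      refine ⟨h1, (ih _ h1).2 fun k => ?_⟩
      have := h (k + 1)
      simpa [add_assoc] using this

lemma take_count_le (l : List Step) (k : ℕ) (s : Step) :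
    (l.take k).count s ≤ l.count s := (List.take_sublist k l).count_le s

lemma isMotzkin_iff (l : List Step) :
    IsMotzkin l ↔ (balOK 0 l = true ∧ bal l = 0) := by
  rw [balOK_iff l 0 le_rfl]
  unfold IsMotzkin bal
  constructor
  · rintro ⟨h1, h2⟩
    constructor
    · intro k
      have := h1 k
      simp only [bal, zero_add]
      omega
    · omega
  · rintro ⟨h1, h2⟩
    constructor
    · intro k
      have := h1 k
      simp only [bal, zero_add] at this
      omega
    · omega

instance : DecidablePred IsMotzkin := fun l =>
  decidable_of_iff _ (isMotzkin_iff l).symm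

/-! ### Plateau lemmas -/

variable (r : ℕ)

def pat : List Step := Step.U :: (List.replicate r Step.H ++ [Step.D])

@[simp] lemma pat_length : (pat r).length = r + 2 := by simp [pat]

lemma takeEq_iff_prefix (l : List Step) :
    l.take (r + 2) = pat r ↔ pat r <+: l := by
  rw [List.prefix_iff_eq_take, pat_length]
  exact ⟨fun h => h.symm, fun h => h.symm⟩

lemma plat_eq (l : List Step) :
    plateauCountR r l =
      ((Finset.range l.length).filter (fun i => pat r <+: l.drop i)).card := by
  unfold plateauCountR
  congr 1
  apply Finset.filter_congr
  intro i _
  exact (takeEq_iff_prefix r _).trans (by rw [pat])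

lemma plat_cons (s : Step) (t : List Step) :
    plateauCountR r (s :: t) =
      (if pat r <+: s :: t then 1 else 0) + plateauCountR r t := by
  rw [plat_eq, plat_eq]
  rw [Finset.card_filter, Finset.card_filter]
  simp only [List.length_cons]
  rw [Finset.sum_range_succ']
  simp only [List.drop_succ_cons, List.drop_zero]
  omega

lemma plat_append_of (a b : List Step)
    (H1 : ∀ i, i < a.length → (pat r <+: a.drop i ++ b) → pat r <+: a.drop i) :
    plateauCountR r (a ++ b) = plateauCountR r a + plateauCountR r b := by
  induction a with
  | nil => simp [plateauCountR]
  | cons s t ih =>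
    rw [List.cons_append, plat_cons, plat_cons]
    have h0 : (pat r <+: s :: (t ++ b)) ↔ (pat r <+: s :: t) := by
      constructor
      · intro h
        exact H1 0 (by simp) (by simpa using h)
      · intro h
        have := h.trans (List.prefix_append (s :: t) b)
        simpa using this
    rw [ih (fun i hi h => H1 (i+1) (by simpa using Nat.succ_lt_succ hi) (by simpa using h))]
    simp only [h0]
    omega

lemma plat_no_U (l : List Step) (h : Step.U ∉ l) : plateauCountR r l = 0 := by
  rw [plat_eq]
  rw [Finset.card_eq_zero, Finset.filter_eq_empty_iff]
  intro i _
  intro hp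
  apply h
  have : Step.U ∈ pat r := by simp [pat]
  exact List.mem_of_mem_drop (hp.subset this)

@[simp] lemma bal_replicate_H (m : ℕ) : bal (List.replicate m Step.H) = 0 := by
  simp [bal, List.count_replicate]

lemma balOK_nonneg_take {q : List Step} (h : balOK 0 q = true) (k : ℕ) :
    0 ≤ bal (q.take k) := by
  have := (balOK_iff q 0 le_rfl).1 h k
  simpa using this

/-- A Motzkin path cannot have a suffix of the form `U H^m`. -/
lemma no_UH_suffix {q : List Step} (hq : IsMotzkin q) (i m : ℕ)
    (h : q.drop i = Step.U :: List.replicate m Step.H) : False := by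
  rw [isMotzkin_iff] at hq
  have h1 : bal q = 0 := hq.2
  have h2 : 0 ≤ bal (q.take i) := balOK_nonneg_take hq.1 i
  have h3 : bal (q.take i) + bal (q.drop i) = 0 := by
    rw [← bal_append, List.take_append_drop]; exact h1
  rw [h, bal_cons] at h3
  simp [stepVal] at h3
  omega

lemma count_D_pat_take (m : ℕ) (hm : m ≤ r + 1) :
    (List.take m (pat r)).count Step.D = 0 := by
  have : List.take m (pat r) = List.take m (Step.U :: List.replicate r Step.H) := by
    rw [pat, show Step.U :: (List.replicate r Step.H ++ [Step.D])
      = (Step.U :: List.replicate r Step.H) ++ [Step.D] by simp,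
      List.take_append_of_le_length (by simpa using hm)]
  rw [this]
  have h2 : (Step.U :: List.replicate r Step.H).count Step.D = 0 := by
    simp [List.count_cons, List.count_replicate]
  have := take_count_le (Step.U :: List.replicate r Step.H) m Step.D
  omega

/-- Key composition: plateaus of `U q D t` for Motzkin `q`. -/
lemma plat_comp {q : List Step} (hq : IsMotzkin q) (t : List Step) :
    plateauCountR r (Step.U :: q ++ Step.D :: t) =
      plateauCountR r q + plateauCountR r t
        + (if q = List.replicate r Step.H then 1 else 0) := by
  have hmq : balOK 0 q = true ∧ bal q = 0 := (isMotzkin_iff q).1 hq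
  -- rewrite as (U :: q ++ [D]) ++ t
  have hsplit : Step.U :: q ++ Step.D :: t = (Step.U :: q ++ [Step.D]) ++ t := by simp
  rw [hsplit]
  -- step 1 : cross-boundary occurrences into t are impossible
  rw [plat_append_of r (Step.U :: q ++ [Step.D]) t ?h1]
  case h1 =>
    intro i hi hpre
    set a : List Step := Step.U :: q ++ [Step.D] with ha
    have hal : a.length = q.length + 2 := by simp [ha]
    by_cases hle : r + 2 ≤ a.length - i
    · -- the pattern fits inside a
      have : List.take (r+2) (a.drop i ++ t) = List.take (r+2) (a.drop i) := by
        apply List.take_append_of_le_length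
        simpa [List.length_drop] using hle
      rw [← takeEq_iff_prefix] at hpre ⊢
      rw [← this]; exact hpre
    · -- a.drop i is a strict prefix of the pattern, but ends with D : contradiction
      exfalso
      push_neg at hle
      have hlen : (a.drop i).length = a.length - i := by simp
      have hadi : a.drop i <+: pat r := by
        refine List.prefix_of_prefix_length_le (List.prefix_append _ _) hpre ?_
        simp [hlen]; omega
      have hdi : a.drop i = (Step.U :: q).drop i ++ [Step.D] := by
        rw [ha, List.cons_append, ← List.cons_append]
        apply List.drop_append_of_le_length
        simp; omega
      have hm : (a.drop i).length ≤ r + 1 := by omega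
      have : a.drop i = List.take (a.drop i).length (pat r) :=
        List.prefix_iff_eq_take.1 hadi
      have hc := count_D_pat_take r _ hm
      rw [← this, hdi] at hc
      simp [List.count_append] at hc
  -- step 2 : peel off the initial U
  rw [show Step.U :: q ++ [Step.D] = Step.U :: (q ++ [Step.D]) by simp, plat_cons]
  -- step 3 : occurrences inside q ++ [D] don't touch the final D
  rw [plat_append_of r q [Step.D] ?h2]
  case h2 =>
    intro i hi hpre
    by_cases hle : r + 2 ≤ q.length - i
    · have : List.take (r+2) (q.drop i ++ [Step.D]) = List.take (r+2) (q.drop i) := by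
        apply List.take_append_of_le_length
        simp; omega
      rw [← takeEq_iff_prefix] at hpre ⊢
      rw [← this]; exact hpre
    · exfalso
      push_neg at hle
      have hlen : (q.drop i ++ [Step.D]).length = q.length - i + 1 := by simp
      have hple : (q.drop i ++ [Step.D]).length ≤ (pat r).length := by
        rw [hlen, pat_length]; omega
      have hlep : (pat r).length ≤ (q.drop i ++ [Step.D]).length := hpre.length_le
      have heq : pat r = q.drop i ++ [Step.D] :=
        hpre.eq_of_length (le_antisymm hlep hple)
      rw [pat, show Step.U :: (List.replicate r Step.H ++ [Step.D])
        = (Step.U :: List.replicate r Step.H) ++ [Step.D] by simp] at heq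
      have := (List.append_inj' heq.symm rfl).1
      exact no_UH_suffix hq i r this
  -- step 4 : compute the remaining pieces
  have hD : plateauCountR r [Step.D] = 0 := plat_no_U r _ (by simp)
  have hind : (pat r <+: Step.U :: (q ++ [Step.D])) ↔ q = List.replicate r Step.H := by
    constructor
    · intro h
      rw [pat, List.cons_prefix_cons] at h
      have h2 : List.replicate r Step.H ++ [Step.D] <+: q ++ [Step.D] := h.2
      rcases le_or_gt (r + 1) q.length with hc | hc
      · exfalso
        have h3 : List.replicate r Step.H ++ [Step.D] <+: q := by
          refine List.prefix_of_prefix_length_le h2 (List.prefix_append _ _) ?_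
          simpa using hc
        have h4 : q.take (r+1) = List.replicate r Step.H ++ [Step.D] := by
          have := List.prefix_iff_eq_take.1 h3
          simpa using this.symm
        have h5 : 0 ≤ bal (q.take (r+1)) :=
          balOK_nonneg_take ((isMotzkin_iff q).1 hq).1 _
        rw [h4] at h5
        simp [stepVal] at h5
      · have hlep : (List.replicate r Step.H ++ [Step.D]).length
            ≤ (q ++ [Step.D]).length := h2.length_le
        simp at hlep
        have hql : q.length = r := le_antisymm (by omega) hlep
        have heq : List.replicate r Step.H ++ [Step.D] = q ++ [Step.D] :=
          h2.eq_of_length (by simp [hql])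
        exact ((List.append_inj' heq rfl).1).symm
    · intro h
      subst h
      exact List.prefix_refl _
  rw [hD]
  by_cases hq' : q = List.replicate r Step.H
  · rw [if_pos hq', if_pos ((hind).2 hq')]
    omega
  · rw [if_neg hq', if_neg (fun h => hq' ((hind).1 h))]
    omega

/-! ### Motzkin structure -/

lemma isMotzkin_nil : IsMotzkin ([] : List Step) := by
  rw [isMotzkin_iff]; simp [balOK]

lemma isMotzkin_cons_H (t : List Step) :
    IsMotzkin (Step.H :: t) ↔ IsMotzkin t := by
  rw [isMotzkin_iff, isMotzkin_iff]
  simp [balOK, stepVal]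

lemma isMotzkin_replicate_H (m : ℕ) : IsMotzkin (List.replicate m Step.H) := by
  induction m with
  | zero => exact isMotzkin_nil
  | succ n ih => rw [List.replicate_succ, isMotzkin_cons_H]; exact ih

lemma balOK_of_shift {q : List Step} (m : ℤ) (hm : 0 ≤ m) (h : balOK 0 q = true) :
    balOK m q = true := by
  rw [balOK_iff _ _ hm]
  intro k
  have := balOK_nonneg_take h k
  omega

lemma isMotzkin_comp {q t : List Step} (hq : IsMotzkin q) (ht : IsMotzkin t) :
    IsMotzkin (Step.U :: q ++ Step.D :: t) := by
  rw [isMotzkin_iff] at hq ht ⊢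
  constructor
  · show balOK 0 (Step.U :: (q ++ Step.D :: t)) = true
    rw [balOK]
    simp only [stepVal, Bool.and_eq_true, decide_eq_true_eq]
    refine ⟨by norm_num, ?_⟩
    rw [balOK_append]
    simp only [Bool.and_eq_true]
    constructor
    · exact balOK_of_shift (0+1) (by norm_num) hq.1
    · rw [hq.2]
      show balOK 1 (Step.D :: t) = true
      rw [balOK]
      simp only [stepVal, Bool.and_eq_true, decide_eq_true_eq]
      exact ⟨by norm_num, by simpa using ht.1⟩
  · simp [stepVal, hq.2, ht.2]

/-- Existence of the first-return decomposition. -/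
lemma exists_decomp {t : List Step} (h : IsMotzkin (Step.U :: t)) :
    ∃ q s, t = q ++ Step.D :: s ∧ IsMotzkin q ∧ IsMotzkin s := by
  rw [isMotzkin_iff] at h
  have hbt : bal t = -1 := by
    have := h.2
    rw [bal_cons] at this
    simp [stepVal] at this
    omega
  have hpref : ∀ k, 0 ≤ 1 + bal (t.take k) := by
    intro k
    have := balOK_nonneg_take h.1 (k+1)
    simpa [List.take_succ_cons, stepVal, add_comm] using this
  have hex : ∃ k, bal (t.take k) < 0 := ⟨t.length, by simp [hbt]⟩
  classical
  obtain ⟨k, hkneg, hkmin⟩ : ∃ k, bal (t.take k) < 0 ∧ ∀ j, j < k → 0 ≤ bal (t.take j) :=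
    ⟨Nat.find hex, Nat.find_spec hex, fun j hj => by have := Nat.find_min hex hj; omega⟩
  have hk0 : k ≠ 0 := by
    intro h0
    rw [h0] at hkneg
    simp at hkneg
  obtain ⟨j, hkj⟩ : ∃ j, k = j + 1 := ⟨k - 1, by omega⟩
  rw [hkj] at hkneg
  have hkm1 : bal (t.take (j+1)) = -1 := by
    have := hpref (j+1)
    omega
  have hjlt : j < t.length := by
    by_contra hc
    push_neg at hc
    have h1 : t.take j = t := List.take_of_length_le hc
    have := hkmin j (by omega)
    rw [h1] at this
    omega
  have htake : t.take (j+1) = t.take j ++ [t[j]] := by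
    rw [List.take_succ]
    simp [List.getElem?_eq_getElem hjlt]
  have hbal : bal (t.take (j+1)) = bal (t.take j) + stepVal t[j] := by
    rw [htake, bal_append]; simp
  have hj0 : 0 ≤ bal (t.take j) := hkmin j (by omega)
  have hD : t[j] = Step.D := by
    rcases e : t[j] with _ | _ | _ <;> rw [e] at hbal <;> simp [stepVal] at hbal <;> omega
  have hbj : bal (t.take j) = 0 := by
    rw [hD] at hbal
    simp [stepVal] at hbal
    omega
  refine ⟨t.take j, t.drop (j+1), ?_, ?_, ?_⟩
  · conv_lhs => rw [← List.take_append_drop j t]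
    rw [List.drop_eq_getElem_cons hjlt, hD]
  · rw [isMotzkin_iff]
    refine ⟨?_, hbj⟩
    rw [balOK_iff _ _ le_rfl]
    intro i
    rw [List.take_take]
    rcases le_or_gt j i with hc | hc
    · rw [min_eq_right hc, hbj]; norm_num
    · rw [min_eq_left hc.le]
      have := hkmin i (by omega)
      omega
  · rw [isMotzkin_iff]
    constructor
    · rw [balOK_iff _ _ le_rfl]
      intro i
      have htt : t.take (j + 1 + i) = t.take (j+1) ++ (t.drop (j+1)).take i :=
        List.take_add
      have h1 := hpref (j + 1 + i)
      rw [htt, bal_append] at h1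
      omega
    · have h2 : bal (t.take (j+1)) + bal (t.drop (j+1)) = bal t := by
        rw [← bal_append, List.take_append_drop]
      omega

lemma decomp_unique_aux {q q' s s' : List Step} (hq : IsMotzkin q) (hq' : IsMotzkin q')
    (hlen : q.length ≤ q'.length)
    (heq : q ++ Step.D :: s = q' ++ Step.D :: s') : q = q' := by
  have hqpre : q <+: q' ++ Step.D :: s' := heq ▸ List.prefix_append q (Step.D :: s)
  have hq'pre : q' <+: q' ++ Step.D :: s' := List.prefix_append _ _
  rcases eq_or_lt_of_le hlen with he | hlt
  · exact (List.append_inj heq he).1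
  · exfalso
    have hqq' : q <+: q' := List.prefix_of_prefix_length_le hqpre hq'pre hlen
    have htq : q'.take q.length = q := (List.prefix_iff_eq_take.1 hqq').symm
    have hget : q'[q.length]? = some Step.D := by
      have h1 : (q ++ Step.D :: s)[q.length]? = some Step.D := by
        rw [List.getElem?_append_right le_rfl]
        simp
      rw [heq] at h1
      rwa [List.getElem?_append_left hlt] at h1
    have htake : q'.take (q.length + 1) = q ++ [Step.D] := by
      rw [List.take_succ, htq, hget]
      rfl
    have h5 : 0 ≤ bal (q'.take (q.length + 1)) :=
      balOK_nonneg_take ((isMotzkin_iff q').1 hq').1 _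
    rw [htake, bal_append] at h5
    have : bal q = 0 := ((isMotzkin_iff q).1 hq).2
    simp [stepVal, this] at h5

lemma decomp_unique {q q' s s' : List Step} (hq : IsMotzkin q) (hq' : IsMotzkin q')
    (heq : q ++ Step.D :: s = q' ++ Step.D :: s') : q = q' ∧ s = s' := by
  have hqeq : q = q' := by
    rcases le_total q.length q'.length with hl | hl
    · exact decomp_unique_aux hq hq' hl heq
    · exact (decomp_unique_aux hq' hq hl heq.symm).symm
  subst hqeq
  refine ⟨rfl, ?_⟩
  have := (List.append_inj heq rfl).2
  simpa using this

/-! ### Counting -/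

instance : Fintype Step :=
  ⟨{Step.U, Step.H, Step.D}, by intro x; cases x <;> simp⟩

def allLists : ℕ → Finset (List Step)
  | 0 => {[]}
  | n+1 => ((Finset.univ : Finset Step) ×ˢ allLists n).image (fun p => p.1 :: p.2)

lemma mem_allLists (n : ℕ) (l : List Step) : l ∈ allLists n ↔ l.length = n := by
  induction n generalizing l with
  | zero => cases l <;> simp [allLists]
  | succ n ih =>
    cases l with
    | nil => simp [allLists]
    | cons s t => simp [allLists, ih]

def mset (n p : ℕ) : Finset (List Step) :=
  (allLists n).filter (fun l => IsMotzkin l ∧ plateauCountR r l = p)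

def msetM (a i : ℕ) : Finset (List Step) :=
  (allLists a).filter (fun q => IsMotzkin q ∧
    plateauCountR r q + (if q = List.replicate r Step.H then 1 else 0) = i)

lemma mem_mset {n p : ℕ} {l : List Step} :
    l ∈ mset r n p ↔ l.length = n ∧ IsMotzkin l ∧ plateauCountR r l = p := by
  simp [mset, mem_allLists, and_assoc]

lemma mem_msetM {a i : ℕ} {q : List Step} :
    q ∈ msetM r a i ↔ q.length = a ∧ IsMotzkin q ∧
      plateauCountR r q + (if q = List.replicate r Step.H then 1 else 0) = i := by
  simp [msetM, mem_allLists, and_assoc]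

lemma plat_cons_H (t : List Step) :
    plateauCountR r (Step.H :: t) = plateauCountR r t := by
  rw [plat_cons]
  have : ¬ (pat r <+: Step.H :: t) := by
    rw [pat, List.cons_prefix_cons]
    rintro ⟨h, -⟩
    exact Step.noConfusion h
  rw [if_neg this]
  omega

lemma not_isMotzkin_cons_D (t : List Step) : ¬ IsMotzkin (Step.D :: t) := by
  rintro ⟨h1, -⟩
  have := h1 1
  simp [List.count_cons] at this

/-- The decomposition target. -/
def Bset (n p : ℕ) : Finset (List Step) :=
  (Finset.HasAntidiagonal.antidiagonal n).biUnion (fun ab =>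
    (Finset.HasAntidiagonal.antidiagonal p).biUnion (fun ij =>
      ((msetM r ab.1 ij.1) ×ˢ (mset r ab.2 ij.2)).image
        (fun qt => Step.U :: qt.1 ++ Step.D :: qt.2)))

lemma mem_Bset {n p : ℕ} {l : List Step} :
    l ∈ Bset r n p ↔ ∃ q t, l = Step.U :: q ++ Step.D :: t ∧ IsMotzkin q ∧ IsMotzkin t ∧
      q.length + t.length = n ∧
      (plateauCountR r q + (if q = List.replicate r Step.H then 1 else 0))
        + plateauCountR r t = p := by
  constructor
  · intro hl
    rw [Bset, Finset.mem_biUnion] at hl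
    obtain ⟨ab, habmem, hl⟩ := hl
    rw [Finset.mem_biUnion] at hl
    obtain ⟨ij, hijmem, hl⟩ := hl
    rw [Finset.mem_image] at hl
    obtain ⟨qt, hqt, rfl⟩ := hl
    rw [Finset.mem_product] at hqt
    rw [mem_msetM] at hqt
    have ht := hqt.2
    rw [mem_mset] at ht
    have hq := hqt.1
    rw [Finset.HasAntidiagonal.mem_antidiagonal] at habmem hijmem
    exact ⟨qt.1, qt.2, rfl, hq.2.1, ht.2.1, by omega, by omega⟩
  · rintro ⟨q, t, rfl, hq, ht, hn, hp⟩
    rw [Bset, Finset.mem_biUnion]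
    refine ⟨(q.length, t.length), Finset.HasAntidiagonal.mem_antidiagonal.2 hn, ?_⟩
    rw [Finset.mem_biUnion]
    refine ⟨(plateauCountR r q +
      (if q = List.replicate r Step.H then 1 else 0), plateauCountR r t),
      Finset.HasAntidiagonal.mem_antidiagonal.2 hp, ?_⟩
    rw [Finset.mem_image]
    refine ⟨(q, t), ?_, rfl⟩
    rw [Finset.mem_product, mem_msetM, mem_mset]
    exact ⟨⟨rfl, hq, rfl⟩, ⟨rfl, ht, rfl⟩⟩

lemma mset_succ_succ (n p : ℕ) :
    mset r (n+2) p = (mset r (n+1) p).image (fun t => Step.H :: t) ∪ Bset r n p := by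
  ext l
  rw [Finset.mem_union, mem_mset, Finset.mem_image, mem_Bset]
  constructor
  · rintro ⟨hlen, hmz, hplat⟩
    cases l with
    | nil => simp at hlen
    | cons s t =>
      cases s with
      | D => exact absurd hmz (not_isMotzkin_cons_D t)
      | H =>
        left
        refine ⟨t, ?_, rfl⟩
        rw [mem_mset]
        refine ⟨by simpa using hlen, (isMotzkin_cons_H t).1 hmz, ?_⟩
        rw [← plat_cons_H]
        exact hplat
      | U =>
        right
        obtain ⟨q, s, rfl, hq, hs⟩ := exists_decomp hmz
        refine ⟨q, s, rfl, hq, hs, ?_, ?_⟩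
        · have := hlen
          simp at this
          omega
        · have := plat_comp r hq s
          rw [show Step.U :: (q ++ Step.D :: s) = Step.U :: q ++ Step.D :: s by simp] at hplat
          omega
  · rintro (⟨t, ht, rfl⟩ | ⟨q, t, rfl, hq, ht, hn, hp⟩)
    · rw [mem_mset] at ht
      exact ⟨by simp [ht.1], (isMotzkin_cons_H t).2 ht.2.1, by rw [plat_cons_H]; exact ht.2.2⟩
    · refine ⟨by simp; omega, isMotzkin_comp hq ht, ?_⟩
      rw [plat_comp r hq t]
      omega

lemma card_Bset (n p : ℕ) :
    (Bset r n p).card = ∑ ab ∈ Finset.HasAntidiagonal.antidiagonal n, ∑ ij ∈ Finset.HasAntidiagonal.antidiagonal p,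
      (msetM r ab.1 ij.1).card * (mset r ab.2 ij.2).card := by
  rw [Bset, Finset.card_biUnion]
  · refine Finset.sum_congr rfl fun ab _ => ?_
    rw [Finset.card_biUnion]
    · refine Finset.sum_congr rfl fun ij _ => ?_
      rw [Finset.card_image_of_injOn, Finset.card_product]
      intro ⟨q, t⟩ hqt ⟨q', t'⟩ hqt' heq
      simp only [Finset.mem_coe, Finset.mem_product, mem_msetM, mem_mset] at hqt hqt'
      simp only [List.cons_append, List.cons.injEq, true_and] at heq
      have := decomp_unique hqt.1.2.1 hqt'.1.2.1 heq
      simp [Prod.ext_iff, this.1, this.2]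
    · -- inner disjointness
      intro ij hij ij' hij' hne
      simp only [Finset.disjoint_left]
      intro l hl hl'
      apply hne
      rw [Finset.mem_image] at hl hl'
      obtain ⟨⟨q, t⟩, hqt, rfl⟩ := hl
      obtain ⟨⟨q', t'⟩, hqt', heq⟩ := hl'
      rw [Finset.mem_product, mem_msetM, mem_mset] at hqt hqt'
      dsimp only at hqt hqt'
      obtain ⟨⟨hql, hqm, hqp⟩, htl, htm, htp⟩ := hqt
      obtain ⟨⟨hql', hqm', hqp'⟩, htl', htm', htp'⟩ := hqt'
      simp only [List.cons_append, List.cons.injEq, true_and] at heq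
      obtain ⟨rfl, rfl⟩ := decomp_unique hqm' hqm heq
      have h1 : ij'.1 = ij.1 := by omega
      have h2 : ij'.2 = ij.2 := by omega
      exact Prod.ext h1.symm h2.symm
  · -- outer disjointness
    intro ab hab ab' hab' hne
    simp only [Finset.disjoint_left]
    intro l hl hl'
    apply hne
    rw [Finset.mem_biUnion] at hl hl'
    obtain ⟨ij, hij, hl⟩ := hl
    obtain ⟨ij', hij', hl'⟩ := hl'
    rw [Finset.mem_image] at hl hl'
    obtain ⟨⟨q, t⟩, hqt, rfl⟩ := hl
    obtain ⟨⟨q', t'⟩, hqt', heq⟩ := hl'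
    rw [Finset.mem_product, mem_msetM, mem_mset] at hqt hqt'
    dsimp only at hqt hqt'
    obtain ⟨⟨hql, hqm, hqp⟩, htl, htm, htp⟩ := hqt
    obtain ⟨⟨hql', hqm', hqp'⟩, htl', htm', htp'⟩ := hqt'
    simp only [List.cons_append, List.cons.injEq, true_and] at heq
    obtain ⟨rfl, rfl⟩ := decomp_unique hqm' hqm heq
    rw [Finset.mem_coe, Finset.HasAntidiagonal.mem_antidiagonal] at hab hab'
    have h1 : ab'.1 = ab.1 := by omega
    have h2 : ab'.2 = ab.2 := by omega
    exact Prod.ext h1.symm h2.symm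

lemma card_rec (n p : ℕ) :
    (mset r (n+2) p).card = (mset r (n+1) p).card +
      ∑ ab ∈ Finset.HasAntidiagonal.antidiagonal n, ∑ ij ∈ Finset.HasAntidiagonal.antidiagonal p,
        (msetM r ab.1 ij.1).card * (mset r ab.2 ij.2).card := by
  rw [mset_succ_succ, Finset.card_union_of_disjoint, card_Bset,
    Finset.card_image_of_injective _ (fun a b h => by injection h)]
  · simp only [Finset.disjoint_left]
    intro l hl hl'
    rw [Finset.mem_image] at hl
    obtain ⟨t, -, rfl⟩ := hl
    rw [mem_Bset] at hl'
    obtain ⟨q, s, heq, -⟩ := hl'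
    rw [List.cons_append] at heq
    injection heq with h1 h2
    exact Step.noConfusion h1

lemma plat_replicate_H : plateauCountR r (List.replicate r Step.H) = 0 :=
  plat_no_U r _ (by simp [List.mem_replicate])

lemma repl_mem_mset : List.replicate r Step.H ∈ mset r r 0 := by
  rw [mem_mset]
  exact ⟨by simp, isMotzkin_replicate_H r, plat_replicate_H r⟩

lemma card_msetM (a i : ℕ) :
    ((msetM r a i).card : ℚ) =
      ((mset r a i).card : ℚ) + (if a = r ∧ i = 1 then 1 else 0)
        - (if a = r ∧ i = 0 then 1 else 0) := by
  by_cases ha : a = r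
  · rw [eq_comm] at ha
    subst ha
    by_cases hi0 : i = 0
    · subst hi0
      have hset : msetM r r 0 = (mset r r 0).erase (List.replicate r Step.H) := by
        ext q
        rw [mem_msetM, Finset.mem_erase, mem_mset]
        constructor
        · rintro ⟨h1, h2, h3⟩
          by_cases hq : q = List.replicate r Step.H
          · rw [if_pos hq] at h3; omega
          · rw [if_neg hq] at h3
            exact ⟨hq, h1, h2, by omega⟩
        · rintro ⟨hq, h1, h2, h3⟩
          exact ⟨h1, h2, by rw [if_neg hq]; omega⟩
      rw [hset, Finset.card_erase_of_mem (repl_mem_mset r)]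
      have hpos : 1 ≤ (mset r r 0).card :=
        Finset.card_pos.2 ⟨_, repl_mem_mset r⟩
      push_cast [Nat.cast_sub hpos]
      simp
    · by_cases hi1 : i = 1
      · subst hi1
        have hset : msetM r r 1 = insert (List.replicate r Step.H) (mset r r 1) := by
          ext q
          rw [mem_msetM, Finset.mem_insert, mem_mset]
          constructor
          · rintro ⟨h1, h2, h3⟩
            by_cases hq : q = List.replicate r Step.H
            · exact Or.inl hq
            · rw [if_neg hq] at h3
              exact Or.inr ⟨h1, h2, by omega⟩
          · rintro (rfl | ⟨h1, h2, h3⟩)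
            · exact ⟨by simp, isMotzkin_replicate_H r,
                by rw [if_pos rfl, plat_replicate_H r]⟩
            · refine ⟨h1, h2, ?_⟩
              have hq : q ≠ List.replicate r Step.H := by
                intro hq
                rw [hq, plat_replicate_H r] at h3
                omega
              rw [if_neg hq]; omega
        rw [hset, Finset.card_insert_of_notMem]
        · push_cast; simp
        · intro hmem
          rw [mem_mset] at hmem
          rw [plat_replicate_H r] at hmem
          omega
      · have hset : msetM r r i = mset r r i := by
          ext q
          rw [mem_msetM, mem_mset]
          constructor
          · rintro ⟨h1, h2, h3⟩
            by_cases hq : q = List.replicate r Step.H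
            · rw [if_pos hq] at h3
              rw [hq, plat_replicate_H r] at h3
              omega
            · rw [if_neg hq] at h3
              exact ⟨h1, h2, by omega⟩
          · rintro ⟨h1, h2, h3⟩
            refine ⟨h1, h2, ?_⟩
            have hq : q ≠ List.replicate r Step.H := by
              intro hq
              rw [hq] at h3
              rw [plat_replicate_H r] at h3
              omega
            rw [if_neg hq]; omega
        rw [hset]
        simp [hi0, hi1]
  · have hset : msetM r a i = mset r a i := by
      ext q
      rw [mem_msetM, mem_mset]
      have : ∀ q : List Step, q.length = a → q ≠ List.replicate r Step.H := by
        intro q hq hcon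
        rw [hcon] at hq
        simp at hq
        exact ha hq.symm
      constructor
      · rintro ⟨h1, h2, h3⟩
        rw [if_neg (this q h1)] at h3
        exact ⟨h1, h2, by omega⟩
      · rintro ⟨h1, h2, h3⟩
        exact ⟨h1, h2, by rw [if_neg (this q h1)]; omega⟩
    rw [hset]
    simp [ha]

lemma isMotzkin_H : IsMotzkin [Step.H] := (isMotzkin_cons_H []).2 isMotzkin_nil

lemma mset_zero (p : ℕ) : mset r 0 p = if p = 0 then {([] : List Step)} else ∅ := by
  ext l
  rw [mem_mset]
  have hnil : plateauCountR r ([] : List Step) = 0 := plat_no_U r _ (by simp)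
  split_ifs with hp
  · subst hp
    simp only [Finset.mem_singleton, List.length_eq_zero_iff]
    constructor
    · rintro ⟨rfl, -, -⟩; rfl
    · rintro rfl; exact ⟨rfl, isMotzkin_nil, hnil⟩
  · simp only [Finset.notMem_empty, iff_false]
    rintro ⟨hl, -, hpl⟩
    rw [List.length_eq_zero_iff] at hl
    subst hl
    rw [hnil] at hpl
    exact hp hpl.symm

lemma mset_one (p : ℕ) : mset r 1 p = if p = 0 then {[Step.H]} else ∅ := by
  ext l
  rw [mem_mset]
  have hH : plateauCountR r [Step.H] = 0 := plat_no_U r _ (by simp)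
  have hchar : ∀ l : List Step, l.length = 1 → IsMotzkin l → l = [Step.H] := by
    intro l hl hm
    match l, hl with
    | [s], _ =>
      cases s with
      | H => rfl
      | D => exact absurd hm (not_isMotzkin_cons_D [])
      | U =>
        exfalso
        rw [isMotzkin_iff] at hm
        have := hm.2
        simp [stepVal] at this
  split_ifs with hp
  · subst hp
    simp only [Finset.mem_singleton]
    constructor
    · rintro ⟨hl, hm, -⟩; exact hchar l hl hm
    · rintro rfl; exact ⟨rfl, isMotzkin_H, hH⟩
  · simp only [Finset.notMem_empty, iff_false]
    rintro ⟨hl, hm, hpl⟩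
    rw [hchar l hl hm, hH] at hpl
    exact hp hpl.symm

noncomputable def F (n p : ℕ) : ℚ := ((mset r n p).card : ℚ)

lemma F_zero (p : ℕ) : F r 0 p = if p = 0 then 1 else 0 := by
  rw [F, mset_zero]
  split_ifs <;> simp

lemma F_one (p : ℕ) : F r 1 p = if p = 0 then 1 else 0 := by
  rw [F, mset_one]
  split_ifs <;> simp

lemma sum_helper (n p c : ℕ) :
    (∑ ab ∈ Finset.HasAntidiagonal.antidiagonal n, ∑ ij ∈ Finset.HasAntidiagonal.antidiagonal p,
      (if ab.1 = r ∧ ij.1 = c then (1:ℚ) else 0) * F r ab.2 ij.2)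
    = if r ≤ n ∧ c ≤ p then F r (n - r) (p - c) else 0 := by
  rw [Finset.Nat.sum_antidiagonal_eq_sum_range_succ_mk]
  have hinner : ∀ k ∈ Finset.range n.succ,
      (∑ ij ∈ Finset.HasAntidiagonal.antidiagonal p,
        (if (k, n - k).1 = r ∧ ij.1 = c then (1:ℚ) else 0) * F r (k, n - k).2 ij.2)
      = if k = r then (if c ≤ p then F r (n - k) (p - c) else 0) else 0 := by
    intro k _
    rw [Finset.Nat.sum_antidiagonal_eq_sum_range_succ_mk]
    by_cases hk : k = r
    · rw [if_pos hk]
      dsimp only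
      simp only [hk, true_and, ite_mul, one_mul, zero_mul]
      rw [Finset.sum_ite_eq' (Finset.range p.succ) c (fun j => F r (n - r) (p - j))]
      simp [Finset.mem_range, Nat.lt_succ_iff, hk]
    · rw [if_neg hk]
      dsimp only
      simp [hk]
  rw [Finset.sum_congr rfl hinner, Finset.sum_ite_eq' (Finset.range n.succ) r]
  simp only [Finset.mem_range, Nat.lt_succ_iff]
  by_cases h1 : r ≤ n <;> by_cases h2 : c ≤ p <;> simp [h1, h2]

lemma F_rec (n p : ℕ) :
    F r (n+2) p = F r (n+1) p
      + (∑ ab ∈ Finset.HasAntidiagonal.antidiagonal n, ∑ ij ∈ Finset.HasAntidiagonal.antidiagonal p,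
          F r ab.1 ij.1 * F r ab.2 ij.2)
      + ((if r ≤ n ∧ 1 ≤ p then F r (n - r) (p - 1) else 0)
          - (if r ≤ n then F r (n - r) p else 0)) := by
  have h := card_rec r n p
  have hQ : F r (n+2) p = F r (n+1) p
      + ∑ ab ∈ Finset.HasAntidiagonal.antidiagonal n, ∑ ij ∈ Finset.HasAntidiagonal.antidiagonal p,
        ((msetM r ab.1 ij.1).card : ℚ) * ((mset r ab.2 ij.2).card : ℚ) := by
    rw [F, F, h]
    push_cast
    ring
  rw [hQ]
  have hsummand : ∀ ab ∈ Finset.HasAntidiagonal.antidiagonal n, ∀ ij ∈ Finset.HasAntidiagonal.antidiagonal p,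
      ((msetM r ab.1 ij.1).card : ℚ) * ((mset r ab.2 ij.2).card : ℚ)
      = F r ab.1 ij.1 * F r ab.2 ij.2
        + ((if ab.1 = r ∧ ij.1 = 1 then (1:ℚ) else 0) * F r ab.2 ij.2
        - (if ab.1 = r ∧ ij.1 = 0 then (1:ℚ) else 0) * F r ab.2 ij.2) := by
    intro ab _ ij _
    rw [card_msetM]
    simp only [F]
    ring
  rw [Finset.sum_congr rfl (fun ab hab => Finset.sum_congr rfl (hsummand ab hab))]
  simp only [Finset.sum_add_distrib, Finset.sum_sub_distrib]
  rw [sum_helper r n p 1, sum_helper r n p 0]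
  have h0 : (if r ≤ n ∧ 0 ≤ p then F r (n - r) (p - 0) else 0)
      = (if r ≤ n then F r (n - r) p else 0) := by
    simp [Nat.zero_le]
  rw [h0]
  ring

lemma cR_eq (n p : ℕ) : cR r (n : ℤ) (p : ℤ) = (mset r n p).card := by
  rw [cR, if_pos ⟨Int.natCast_nonneg n, Int.natCast_nonneg p⟩]
  simp only [Int.toNat_natCast]
  rw [← Nat.card_eq_finsetCard]
  exact Nat.card_congr (Equiv.subtypeEquivRight (fun l => (mem_mset r).symm))

open PowerSeries

noncomputable def G : PowerSeries (PowerSeries ℚ) :=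
  PowerSeries.mk fun n => PowerSeries.mk fun p => F r n p

lemma G_eq : G r = 1 + X * G r + X ^ 2 * (G r * G r)
    + X ^ (r + 2) * ((C (R := PowerSeries ℚ) X - 1) * G r) := by
  apply PowerSeries.ext
  intro n
  rw [map_add, map_add, map_add,
    PowerSeries.coeff_X_pow_mul' ((C (R := PowerSeries ℚ) X - 1) * G r) (r+2) n,
    PowerSeries.coeff_X_pow_mul' (G r * G r) 2 n]
  rcases n with _ | n
  · rw [if_neg (by omega), if_neg (by omega)]
    have h1 : (coeff (R := PowerSeries ℚ) 0) (X * G r) = 0 := by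
      simp [PowerSeries.coeff_zero_eq_constantCoeff, map_mul]
    rw [h1]
    apply PowerSeries.ext
    intro p
    simp only [G, coeff_mk, PowerSeries.coeff_one, add_zero, zero_add, map_add]
    rw [F_zero]
    simp [PowerSeries.coeff_one]
  · rw [coeff_succ_X_mul, PowerSeries.coeff_one, if_neg (Nat.succ_ne_zero n)]
    rcases n with _ | m
    · rw [if_neg (by omega), if_neg (by omega)]
      apply PowerSeries.ext
      intro p
      simp only [G, coeff_mk, map_add]
      rw [F_one, F_zero]
      simp
    · -- n = m + 2
      rw [if_pos (by omega)]
      have hmm : m + 1 + 1 - 2 = m := by omega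
      rw [hmm]
      by_cases hrm : r ≤ m
      · rw [if_pos (by omega)]
        have hmr : m + 1 + 1 - (r + 2) = m - r := by omega
        rw [hmr]
        apply PowerSeries.ext
        intro p
        simp only [map_add, G, coeff_mk]
        rw [PowerSeries.coeff_mul m (PowerSeries.mk fun n => PowerSeries.mk fun p => F r n p)
          (PowerSeries.mk fun n => PowerSeries.mk fun p => F r n p)]
        rw [map_sum]
        have hsum : ∀ ab ∈ Finset.HasAntidiagonal.antidiagonal m,
            (coeff (R := ℚ) p) ((coeff (R := PowerSeries ℚ) ab.1)
                (PowerSeries.mk fun n => PowerSeries.mk fun p => F r n p)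
              * (coeff (R := PowerSeries ℚ) ab.2)
                (PowerSeries.mk fun n => PowerSeries.mk fun p => F r n p))
            = ∑ ij ∈ Finset.HasAntidiagonal.antidiagonal p, F r ab.1 ij.1 * F r ab.2 ij.2 := by
          intro ab _
          rw [coeff_mk, coeff_mk, PowerSeries.coeff_mul]
          simp only [coeff_mk]
        rw [Finset.sum_congr rfl hsum]
        rw [sub_mul, one_mul, map_sub, map_sub, PowerSeries.coeff_C_mul]
        have hX : (coeff (R := ℚ) p) (X * (coeff (R := PowerSeries ℚ) (m - r))
            (PowerSeries.mk fun n => PowerSeries.mk fun p => F r n p))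
            = if 1 ≤ p then F r (m - r) (p - 1) else 0 := by
          rw [coeff_mk]
          rcases p with _ | p
          · simp [PowerSeries.coeff_zero_eq_constantCoeff, map_mul]
          · rw [coeff_succ_X_mul, coeff_mk, if_pos (by omega)]
            simp
        rw [hX, coeff_mk]
        rw [F_rec r m p]
        rw [if_pos hrm]
        by_cases hp : 1 ≤ p
        · rw [if_pos ⟨hrm, hp⟩, if_pos hp]
          simp only [map_zero, PowerSeries.coeff_mk]
          ring
        · rw [if_neg (fun h => hp h.2), if_neg hp]
          simp only [map_zero, PowerSeries.coeff_mk]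
          ring
      · rw [if_neg (by omega)]
        apply PowerSeries.ext
        intro p
        simp only [map_add, G, coeff_mk]
        rw [PowerSeries.coeff_mul m (PowerSeries.mk fun n => PowerSeries.mk fun p => F r n p)
          (PowerSeries.mk fun n => PowerSeries.mk fun p => F r n p)]
        rw [map_sum]
        have hsum : ∀ ab ∈ Finset.HasAntidiagonal.antidiagonal m,
            (coeff (R := ℚ) p) ((coeff (R := PowerSeries ℚ) ab.1)
                (PowerSeries.mk fun n => PowerSeries.mk fun p => F r n p)
              * (coeff (R := PowerSeries ℚ) ab.2)
                (PowerSeries.mk fun n => PowerSeries.mk fun p => F r n p))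
            = ∑ ij ∈ Finset.HasAntidiagonal.antidiagonal p, F r ab.1 ij.1 * F r ab.2 ij.2 := by
          intro ab _
          rw [coeff_mk, coeff_mk, PowerSeries.coeff_mul]
          simp only [coeff_mk]
        rw [Finset.sum_congr rfl hsum]
        rw [F_rec r m p]
        rw [if_neg hrm, if_neg (fun h => hrm h.1)]
        simp

end MAux

open PowerSeries in
/-- Working in `ℚ[[x,y]]` realized as `(ℚ[[y]])[[x]]`: the outer variable is `x`
and the inner variable is `y`; `g` is the bivariate generating function for
plateaus of length `r`. -/
theorem explicit_form_r (r : ℕ) (hr : 1 ≤ r)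
    (g : PowerSeries (PowerSeries ℚ))
    (hg : g = PowerSeries.mk fun n => PowerSeries.mk fun p => (cR r n p : ℚ)) :
    (2 * X ^ 2 * g - (1 - X + X ^ (r + 2) - X ^ (r + 2) * PowerSeries.C (R := PowerSeries ℚ) X)) ^ 2
      = (1 - X + X ^ (r + 2) - X ^ (r + 2) * PowerSeries.C (R := PowerSeries ℚ) X) ^ 2
        - 4 * X ^ 2 := by
  have hgG : g = MAux.G r := by
    rw [hg, MAux.G]
    apply PowerSeries.ext
    intro n
    rw [PowerSeries.coeff_mk, PowerSeries.coeff_mk]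
    apply PowerSeries.ext
    intro p
    rw [PowerSeries.coeff_mk, PowerSeries.coeff_mk, MAux.cR_eq r n p]
    rfl
  have h := MAux.G_eq r
  rw [← hgG] at h
  linear_combination (-(4 : PowerSeries (PowerSeries ℚ)) * X ^ 2) * h
end

section
/- Fix an integer r ≥ 1 and let g_r(x,y) = Σ_{n≥0} Σ_{p≥0} c_r(n,p) x^n y^p ∈ ℚ[[x,y]]. Then g_r satisfies the functional equation g_r(x,y) = 1 + x·g_r(x,y) + x²·g_r(x,y)·(g_r(x,y) - x^r + x^r·y). -/
namespace Aux
open Step Finset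

abbrev pat (r : ℕ) : List Step := Step.U :: (List.replicate r Step.H ++ [Step.D])

lemma pat_length (r : ℕ) : (pat r).length = r + 2 := by simp [pat]

lemma pl_nil (r : ℕ) : plateauCountR r [] = 0 := by simp [plateauCountR]

lemma pl_cons (r : ℕ) (x : Step) (t : List Step) :
    plateauCountR r (x :: t)
      = (if (x :: t).take (r + 2) = pat r then 1 else 0) + plateauCountR r t := by
  unfold plateauCountR
  rw [Finset.card_filter, Finset.card_filter]
  simp only [List.length_cons]
  rw [Finset.sum_range_succ']
  simp only [List.drop_succ_cons, List.drop_zero]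
  exact add_comm _ _

lemma take_ne_pat {r : ℕ} {t : List Step} {x : Step} (hx : x ≠ U) :
    (x :: t).take (r + 2) ≠ pat r := by
  rw [List.take_succ_cons]
  intro h
  exact hx (List.head_eq_of_cons_eq h)

lemma pl_cons_ne (r : ℕ) {x : Step} (hx : x ≠ U) (t : List Step) :
    plateauCountR r (x :: t) = plateauCountR r t := by
  rw [pl_cons, if_neg (take_ne_pat hx), zero_add]

lemma pl_replicate (r k : ℕ) : plateauCountR r (List.replicate k H) = 0 := by
  induction k with
  | zero => exact pl_nil r
  | succ k ih =>
    rw [List.replicate_succ, pl_cons_ne r (fun h => Step.noConfusion h) _, ih]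

lemma pl_append_D (r : ℕ) (t : List Step) :
    ∀ s : List Step, (∀ j, s.drop j ≠ U :: List.replicate r H) →
      plateauCountR r (s ++ D :: t) = plateauCountR r s + plateauCountR r t := by
  intro s
  induction s with
  | nil =>
    intro _
    rw [List.nil_append, pl_cons_ne r (fun h => Step.noConfusion h) t, pl_nil, zero_add]
  | cons x s' ih =>
    intro hs
    have ih' := ih (fun j => by simpa using hs (j + 1))
    rw [List.cons_append, pl_cons, pl_cons r x s', ih']
    have hiff : ((x :: (s' ++ D :: t)).take (r + 2) = pat r)
        ↔ ((x :: s').take (r + 2) = pat r) := by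
      have hsplit : (x :: (s' ++ D :: t)).take (r + 2)
          = (x :: s').take (r + 2) ++ (D :: t).take (r + 2 - (s'.length + 1)) := by
        have : x :: (s' ++ D :: t) = (x :: s') ++ (D :: t) := rfl
        rw [this, List.take_append, List.length_cons]
      rcases le_or_gt (r + 2) (s'.length + 1) with hm | hm
      · rw [hsplit, Nat.sub_eq_zero_of_le hm, List.take_zero, List.append_nil]
      · have hlen : s'.length + 1 ≤ r + 1 := by omega
        constructor
        · intro hC1
          exfalso
          rw [hsplit, List.take_of_length_le (by simp; omega)] at hC1
          rcases eq_or_lt_of_le hlen with hm1 | hm2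
          · -- s'.length + 1 = r + 1
            have h1 : r + 2 - (s'.length + 1) = 1 := by omega
            rw [h1] at hC1
            have h2 : (x :: s') ++ [D] = (U :: List.replicate r H) ++ [D] := by
              simpa [pat] using hC1
            have h3 := (List.append_inj' h2 rfl).1
            exact hs 0 (by simpa using h3)
          · -- s'.length + 1 ≤ r
            have hm' : s'.length + 1 ≤ r := by omega
            have hD : ((x :: s') ++ (D :: t).take (r + 2 - (s'.length + 1)))[s'.length + 1]?
                = some D := by
              rw [List.getElem?_append_right (by simp)]
              simp only [List.length_cons, Nat.sub_self]
              have h4 : r + 2 - (s'.length + 1) = (r + 1 - (s'.length + 1)) + 1 := by omega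
              rw [h4, List.take_succ_cons]
              simp
            rw [hC1] at hD
            have hH : (pat r)[s'.length + 1]? = some H := by
              show (U :: (List.replicate r H ++ [D]))[s'.length + 1]? = some H
              rw [List.getElem?_cons_succ, List.getElem?_append_left (by simp; omega),
                List.getElem?_replicate, if_pos (by omega)]
            rw [hH] at hD
            exact Step.noConfusion (Option.some.inj hD)
        · intro hC2
          exfalso
          have := congrArg List.length hC2
          rw [List.length_take, pat_length] at this
          simp at this
          omega
    simp only [hiff]
    ring
end Aux

namespace Aux
open Step

lemma motzkin_no_suffix {r : ℕ} {s : List Step} (hs : IsMotzkin s) :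
    ∀ j, s.drop j ≠ U :: List.replicate r H := by
  intro j hj
  have hdecomp : s = s.take j ++ (U :: List.replicate r H) := by
    rw [← hj, List.take_append_drop]
  have h1 := hs.1 j
  have h2 := hs.2
  rw [hdecomp, List.count_append, List.count_append] at h2
  simp [List.count_cons, List.count_replicate] at h2
  omega

end Aux

namespace Aux
open Step

lemma take_U_pat_iff {r : ℕ} {M1 M2 : List Step} (h1 : IsMotzkin M1) :
    (U :: (M1 ++ D :: M2)).take (r + 2) = pat r ↔ M1 = List.replicate r H := by
  rw [List.take_succ_cons]
  show _ ↔ _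
  rw [show pat r = U :: (List.replicate r H ++ [D]) from rfl, List.cons.injEq]
  simp only [true_and]
  constructor
  · intro E
    rw [List.take_append] at E
    rcases le_or_gt (r + 1) M1.length with ha | ha
    · rw [Nat.sub_eq_zero_of_le ha, List.take_zero, List.append_nil] at E
      exfalso
      have := h1.1 (r + 1)
      rw [E] at this
      simp [List.count_append, List.count_replicate] at this
    · rw [List.take_of_length_le (by omega)] at E
      rcases eq_or_lt_of_le (Nat.lt_succ_iff.mp ha) with har | har
      · have h2 : r + 1 - M1.length = 1 := by omega
        rw [h2] at E
        have : (D :: M2).take 1 = [D] := rfl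
        rw [this] at E
        exact (List.append_inj' E rfl).1
      · exfalso
        have hD : (M1 ++ (D :: M2).take (r + 1 - M1.length))[M1.length]? = some D := by
          rw [List.getElem?_append_right (le_refl _), Nat.sub_self]
          have h4 : r + 1 - M1.length = (r - M1.length) + 1 := by omega
          rw [h4, List.take_succ_cons]
          simp
        rw [E] at hD
        rw [List.getElem?_append_left (by simp [har]), List.getElem?_replicate,
          if_pos har] at hD
        exact Step.noConfusion (Option.some.inj hD)
  · rintro rfl
    have h5 : (List.replicate r H).length + 1 = r + 1 := by simp
    rw [← h5, List.take_length_add_append]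
    rfl

lemma pl_decomp {r : ℕ} {M1 M2 : List Step} (h1 : IsMotzkin M1) :
    plateauCountR r (U :: (M1 ++ D :: M2))
      = plateauCountR r M1 + plateauCountR r M2
        + (if M1 = List.replicate r H then 1 else 0) := by
  rw [pl_cons, pl_append_D r M2 M1 (motzkin_no_suffix h1)]
  simp only [take_U_pat_iff h1]
  ring

lemma isMotzkin_nil : IsMotzkin ([] : List Step) := ⟨fun k => by simp, by simp⟩

lemma isMotzkin_replicate_H (r : ℕ) : IsMotzkin (List.replicate r H) := by
  constructor
  · intro k
    rw [List.take_replicate]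
    simp [List.count_replicate]
  · simp [List.count_replicate]

lemma isMotzkin_cons_H {t : List Step} : IsMotzkin (H :: t) ↔ IsMotzkin t := by
  constructor
  · intro h
    constructor
    · intro k
      have := h.1 (k + 1)
      rw [List.take_succ_cons] at this
      simpa [List.count_cons] using this
    · have := h.2
      simpa [List.count_cons] using this
  · intro h
    constructor
    · intro k
      cases k with
      | zero => simp
      | succ k =>
        rw [List.take_succ_cons]
        simpa [List.count_cons] using h.1 k
    · simpa [List.count_cons] using h.2

lemma not_isMotzkin_cons_D {t : List Step} : ¬ IsMotzkin (D :: t) := by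
  intro h
  have := h.1 1
  simp [List.count_cons] at this

lemma isMotzkin_U_append {M1 M2 : List Step} (h1 : IsMotzkin M1) (h2 : IsMotzkin M2) :
    IsMotzkin (U :: (M1 ++ D :: M2)) := by
  constructor
  · intro k
    cases k with
    | zero => simp
    | succ j =>
      rw [List.take_succ_cons, List.take_append]
      have e1 := h1.1 j
      have key : ∀ m, ((D :: M2).take m).count D ≤ 1 + ((D :: M2).take m).count U := by
        intro m
        cases m with
        | zero => simp
        | succ i =>
          rw [List.take_succ_cons]
          have := h2.1 i
          simp only [List.count_cons]
          simp
          omega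
      have e2 := key (j - M1.length)
      simp only [List.count_cons, List.count_append]
      simp
      omega
  · have := h1.2
    have := h2.2
    simp [List.count_cons, List.count_append]
    omega

lemma isMotzkin_right_of_U_append {M1 M2 : List Step}
    (h : IsMotzkin (U :: (M1 ++ D :: M2))) (h1 : IsMotzkin M1) : IsMotzkin M2 := by
  constructor
  · intro j
    have hk := h.1 (M1.length + (1 + j) + 1)
    rw [List.take_succ_cons, List.take_length_add_append] at hk
    have : (D :: M2).take (1 + j) = D :: M2.take j := by
      rw [add_comm, List.take_succ_cons]
    rw [this] at hk
    have e1 := h1.2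
    simp only [List.count_cons, List.count_append] at hk
    simp at hk
    omega
  · have e1 := h.2
    have e2 := h1.2
    simp [List.count_cons, List.count_append] at e1
    omega

end Aux

namespace Aux
open Step

lemma append_eq_inj {M1 M2 M1' M2' : List Step} (h1 : IsMotzkin M1)
    (h1' : IsMotzkin M1') (h : M1 ++ D :: M2 = M1' ++ D :: M2') :
    M1 = M1' ∧ M2 = M2' := by
  have key : ∀ {A B A' B' : List Step}, IsMotzkin A → IsMotzkin A' →
      A ++ D :: B = A' ++ D :: B' → A.length < A'.length → False := by
    intro A B A' B' hA hA' hE hlt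
    have htake : A ++ [D] = A'.take (A.length + 1) := by
      have e1 : (A ++ D :: B).take (A.length + 1) = A ++ [D] := by
        rw [List.take_length_add_append]; rfl
      have e2 : (A' ++ D :: B').take (A.length + 1) = A'.take (A.length + 1) := by
        rw [List.take_append, Nat.sub_eq_zero_of_le (by omega),
          List.take_zero, List.append_nil]
      rw [← e1, hE, e2]
    have hc := hA'.1 (A.length + 1)
    rw [← htake] at hc
    have e2 := hA.2
    simp [List.count_append, List.count_cons] at hc
    omega
  have hlen : M1.length = M1'.length := by
    rcases lt_trichotomy M1.length M1'.length with hl | hl | hl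
    · exact absurd (key h1 h1' h hl) (fun f => f)
    · exact hl
    · exact absurd (key h1' h1 h.symm hl) (fun f => f)
  obtain ⟨e1, e2⟩ := List.append_inj h hlen
  exact ⟨e1, by injection e2⟩

lemma exists_decomp {t : List Step} (h : IsMotzkin (U :: t)) :
    ∃ M1 M2, IsMotzkin M1 ∧ IsMotzkin M2 ∧ t = M1 ++ D :: M2 := by
  have hP : ∃ k, (t.take k).count D = (t.take k).count U + 1 := by
    refine ⟨t.length, ?_⟩
    rw [List.take_of_length_le (le_refl _)]
    have := h.2
    simp [List.count_cons] at this
    omega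
  classical
  obtain ⟨k, hk, hmin, hkle⟩ :
      ∃ k, (t.take k).count D = (t.take k).count U + 1 ∧
        (∀ j, j < k → ¬ ((t.take j).count D = (t.take j).count U + 1)) ∧ k ≤ t.length :=
    ⟨Nat.find hP, Nat.find_spec hP, fun j hj => Nat.find_min hP hj,
      Nat.find_le (by
        rw [List.take_of_length_le (le_refl _)]
        have := h.2
        simp [List.count_cons] at this
        omega)⟩
  have hk0 : 0 < k := by
    rcases Nat.eq_zero_or_pos k with h0 | h0
    · exfalso; rw [h0] at hk; simp at hk
    · exact h0
  -- prefix claim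
  have claim : ∀ j, j < k → (t.take j).count D ≤ (t.take j).count U := by
    intro j
    induction j with
    | zero => intro _; simp
    | succ j ih =>
      intro hj
      have hjk : j < k := by omega
      have hjlen : j < t.length := by omega
      have hsplit : t.take (j + 1) = t.take j ++ (t.drop j).take 1 := by
        rw [← List.take_add]
      obtain ⟨x, t', hx⟩ : ∃ x t', t.drop j = x :: t' := by
        cases hd : t.drop j with
        | nil => exfalso; have := congrArg List.length hd; simp at this; omega
        | cons x t' => exact ⟨x, t', rfl⟩
      rw [hx] at hsplit
      have h1 : (t.take j).count D ≤ (t.take j).count U := ih hjk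
      have hne := hmin (j+1) hj
      rw [hsplit] at hne ⊢
      have h3 : ((x :: t').take 1) = [x] := rfl
      rw [h3] at hne ⊢
      cases x <;> simp [List.count_append, List.count_cons] at hne ⊢ <;> omega
  -- the step at k-1 is D
  obtain ⟨j0, rfl⟩ : ∃ j0, k = j0 + 1 := ⟨k - 1, by omega⟩
  have hj0len : j0 < t.length := by omega
  obtain ⟨x, t', hx⟩ : ∃ x t', t.drop j0 = x :: t' := by
    cases hd : t.drop j0 with
    | nil => exfalso; have := congrArg List.length hd; simp at this; omega
    | cons x t' => exact ⟨x, t', rfl⟩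
  have hsplit : t.take (j0 + 1) = t.take j0 ++ [x] := by
    rw [show [x] = (x :: t').take 1 from rfl, ← hx, ← List.take_add]
  have hclaim := claim j0 (by omega)
  have hxD : x = D ∧ (t.take j0).count D = (t.take j0).count U := by
    rw [hsplit] at hk
    cases x <;> simp [List.count_append, List.count_cons] at hk <;>
      first
        | (exact absurd hk (by omega))
        | (exact ⟨rfl, by omega⟩)
  refine ⟨t.take j0, t', ?_, ?_, ?_⟩
  · constructor
    · intro i
      rw [List.take_take]
      exact claim (min i j0) (by omega)
    · exact hxD.2.symm
  · -- t' Motzkin via isMotzkin_right_of_U_append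
    have hteq : t = t.take j0 ++ D :: t' := by
      conv_lhs => rw [← List.take_append_drop j0 t]
      rw [hx, hxD.1]
    refine isMotzkin_right_of_U_append (M1 := t.take j0) (M2 := t') ?_ ?_
    · rw [← hteq]; exact h
    · constructor
      · intro i
        rw [List.take_take]
        exact claim (min i j0) (by omega)
      · exact hxD.2.symm
  · conv_lhs => rw [← List.take_append_drop j0 t]
    rw [hx, hxD.1]

end Aux

namespace Aux
open Step Finset PowerSeries

instance : Fintype Step := ⟨{U, H, D}, by intro x; cases x <;> simp⟩

def lists : ℕ → Finset (List Step)
  | 0 => {[]}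
  | n + 1 => (Finset.univ ×ˢ lists n).image fun p => p.1 :: p.2

lemma mem_lists {n : ℕ} {l : List Step} : l ∈ lists n ↔ l.length = n := by
  induction n generalizing l with
  | zero => simp [lists, List.length_eq_zero_iff]
  | succ n ih =>
    simp only [lists, Finset.mem_image, Finset.mem_product, Finset.mem_univ, true_and]
    constructor
    · rintro ⟨⟨x, t⟩, ht, rfl⟩; simp [ih.1 ht]
    · intro h
      cases l with
      | nil => simp at h
      | cons x t => exact ⟨(x, t), ih.2 (by simpa using h), rfl⟩

noncomputable def MS (n : ℕ) : Finset (List Step) :=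
  @Finset.filter _ IsMotzkin (Classical.decPred _) (lists n)

lemma mem_MS {n : ℕ} {l : List Step} : l ∈ MS n ↔ l.length = n ∧ IsMotzkin l := by
  simp [MS, Finset.mem_filter, mem_lists]

noncomputable def F (r n : ℕ) : PowerSeries ℚ :=
  ∑ l ∈ MS n, (PowerSeries.X : PowerSeries ℚ) ^ plateauCountR r l

lemma coeff_F (r n p : ℕ) :
    (PowerSeries.coeff p) (F r n)
      = ((MS n).filter (fun l => plateauCountR r l = p)).card := by
  rw [F, map_sum, Finset.card_filter]
  push_cast
  refine Finset.sum_congr rfl fun l _ => ?_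
  rw [PowerSeries.coeff_X_pow]
  by_cases h : plateauCountR r l = p
  · simp [h]
  · rw [if_neg h, if_neg (fun e => h e.symm)]

lemma MS_zero : MS 0 = {[]} := by
  ext l
  simp only [mem_MS, Finset.mem_singleton, List.length_eq_zero_iff]
  constructor
  · rintro ⟨rfl, _⟩; rfl
  · rintro rfl; exact ⟨rfl, isMotzkin_nil⟩

lemma MS_one : MS 1 = {[H]} := by
  ext l
  simp only [mem_MS, Finset.mem_singleton]
  constructor
  · rintro ⟨hlen, hm⟩
    obtain ⟨x, rfl⟩ : ∃ x, l = [x] := by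
      cases l with
      | nil => simp at hlen
      | cons x t =>
        cases t with
        | nil => exact ⟨x, rfl⟩
        | cons y t' => simp at hlen
    cases x with
    | U => exfalso; have := hm.2; simp [List.count_cons] at this
    | H => rfl
    | D => exact absurd hm not_isMotzkin_cons_D
  · rintro rfl
    exact ⟨rfl, isMotzkin_cons_H.2 isMotzkin_nil⟩

lemma F_zero (r : ℕ) : F r 0 = 1 := by
  rw [F, MS_zero]
  simp [pl_nil]

lemma F_one (r : ℕ) : F r 1 = 1 := by
  rw [F, MS_one]
  have h0 : plateauCountR r [H] = 0 := by
    rw [pl_cons_ne r (by decide) ([] : List Step), pl_nil]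
  simp [h0]

lemma replicate_mem_MS (r : ℕ) : List.replicate r H ∈ MS r :=
  mem_MS.2 ⟨by simp, isMotzkin_replicate_H r⟩

lemma G_eq (r b : ℕ) :
    ∑ M ∈ MS b, (PowerSeries.X : PowerSeries ℚ)
        ^ (plateauCountR r M + (if M = List.replicate r H then 1 else 0))
      = F r b - (if b = r then 1 else 0) + (if b = r then PowerSeries.X else 0) := by
  by_cases hbr : b = r
  · subst hbr
    rw [if_pos rfl, if_pos rfl]
    rw [← Finset.sum_erase_add _ _ (replicate_mem_MS b), if_pos rfl, pl_replicate]
    rw [F, ← Finset.sum_erase_add _ _ (replicate_mem_MS b), pl_replicate]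
    have : ∑ M ∈ (MS b).erase (List.replicate b H),
        (PowerSeries.X : PowerSeries ℚ)
          ^ (plateauCountR b M + (if M = List.replicate b H then 1 else 0))
        = ∑ M ∈ (MS b).erase (List.replicate b H),
          (PowerSeries.X : PowerSeries ℚ) ^ plateauCountR b M := by
      refine Finset.sum_congr rfl fun M hM => ?_
      rw [if_neg (Finset.ne_of_mem_erase hM), add_zero]
    rw [this]
    ring
  · rw [if_neg hbr, if_neg hbr, sub_zero, add_zero, F]
    refine Finset.sum_congr rfl fun M hM => ?_
    have hlen : M.length = b := (mem_MS.1 hM).1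
    have : M ≠ List.replicate r H := by
      intro h
      rw [h] at hlen
      simp at hlen
      exact hbr hlen.symm
    rw [if_neg this, add_zero]

end Aux

namespace Aux
open Step Finset PowerSeries

lemma F_rec (r m : ℕ) :
    F r (m + 2) = F r (m + 1)
      + ∑ ab ∈ Finset.HasAntidiagonal.antidiagonal m, F r ab.1 *
          (∑ M ∈ MS ab.2, (PowerSeries.X : PowerSeries ℚ)
            ^ (plateauCountR r M + (if M = List.replicate r H then 1 else 0))) := by
  classical
  -- rewrite the convolution as a sum over a sigma type
  have hconv : ∑ ab ∈ Finset.HasAntidiagonal.antidiagonal m, F r ab.1 *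
          (∑ M ∈ MS ab.2, (PowerSeries.X : PowerSeries ℚ)
            ^ (plateauCountR r M + (if M = List.replicate r H then 1 else 0)))
      = ∑ x ∈ (Finset.HasAntidiagonal.antidiagonal m).sigma (fun ab => MS ab.1 ×ˢ MS ab.2),
          (PowerSeries.X : PowerSeries ℚ)
            ^ (plateauCountR r x.2.1 + (plateauCountR r x.2.2
              + (if x.2.2 = List.replicate r H then 1 else 0))) := by
    rw [Finset.sum_sigma]
    refine Finset.sum_congr rfl fun ab _ => ?_
    rw [Finset.sum_product, F, Finset.sum_mul_sum]
    refine Finset.sum_congr rfl fun M2 _ => Finset.sum_congr rfl fun M1 _ => ?_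
    rw [← pow_add]
  rw [hconv]
  -- split the Motzkin paths of length m+2 by their first step
  have hsplit := Finset.sum_filter_add_sum_filter_not (MS (m + 2))
    (fun l => l.head? = some H)
    (fun l => (PowerSeries.X : PowerSeries ℚ) ^ plateauCountR r l)
  rw [F, ← hsplit]
  congr 1
  · -- paths starting with H
    rw [F]
    refine (Finset.sum_bij (fun t _ => H :: t) ?_ ?_ ?_ ?_).symm
    · intro t ht
      rw [Finset.mem_filter]
      obtain ⟨hlen, hm⟩ := mem_MS.1 ht
      exact ⟨mem_MS.2 ⟨by simp [hlen], isMotzkin_cons_H.2 hm⟩, rfl⟩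
    · intro t1 _ t2 _ h
      injection h
    · intro l hl
      obtain ⟨hl1, hl2⟩ := Finset.mem_filter.1 hl
      obtain ⟨hlen, hm⟩ := mem_MS.1 hl1
      cases l with
      | nil => simp at hlen
      | cons x t =>
        simp only [List.head?_cons, Option.some.injEq] at hl2
        exact ⟨t, mem_MS.2 ⟨by simpa using hlen, isMotzkin_cons_H.1 (hl2 ▸ hm)⟩,
          by subst hl2; rfl⟩
    · intro t _
      rw [pl_cons_ne r (by decide) t]
  · -- paths starting with U
    refine (Finset.sum_bij
      (fun x _ => U :: (x.2.2 ++ D :: x.2.1)) ?_ ?_ ?_ ?_).symm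
    · rintro ⟨⟨a, b⟩, M2, M1⟩ hx
      simp only [Finset.mem_sigma, Finset.mem_product, Finset.HasAntidiagonal.mem_antidiagonal] at hx
      obtain ⟨hab, hM2, hM1⟩ := hx
      obtain ⟨hlen2, hm2⟩ := mem_MS.1 hM2
      obtain ⟨hlen1, hm1⟩ := mem_MS.1 hM1
      rw [Finset.mem_filter]
      refine ⟨mem_MS.2 ⟨?_, isMotzkin_U_append hm1 hm2⟩, by simp⟩
      simp [hlen1, hlen2]
      omega
    · rintro ⟨⟨a, b⟩, M2, M1⟩ hx ⟨⟨a', b'⟩, M2', M1'⟩ hx' h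
      simp only [Finset.mem_sigma, Finset.mem_product, Finset.HasAntidiagonal.mem_antidiagonal] at hx hx'
      obtain ⟨hab, hM2, hM1⟩ := hx
      obtain ⟨hab', hM2', hM1'⟩ := hx'
      dsimp only at h
      have h' : M1 ++ D :: M2 = M1' ++ D :: M2' := by injection h
      obtain ⟨e1, e2⟩ := append_eq_inj (mem_MS.1 hM1).2 (mem_MS.1 hM1').2 h'
      have ha : a = a' := by
        rw [← (mem_MS.1 hM2).1, ← (mem_MS.1 hM2').1, e2]
      have hb : b = b' := by
        rw [← (mem_MS.1 hM1).1, ← (mem_MS.1 hM1').1, e1]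
      subst ha hb e1 e2
      rfl
    · intro l hl
      obtain ⟨hl1, hl2⟩ := Finset.mem_filter.1 hl
      obtain ⟨hlen, hm⟩ := mem_MS.1 hl1
      cases l with
      | nil => simp at hlen
      | cons x t =>
        have hx : x = U := by
          cases x with
          | U => rfl
          | H => simp at hl2
          | D => exact absurd hm not_isMotzkin_cons_D
        subst hx
        obtain ⟨M1, M2, hm1, hm2, rfl⟩ := exists_decomp hm
        have hlen' : M2.length + M1.length = m := by
          simp at hlen
          omega
        refine ⟨⟨(M2.length, M1.length), M2, M1⟩, ?_, rfl⟩
        simp only [Finset.mem_sigma, Finset.mem_product, Finset.HasAntidiagonal.mem_antidiagonal]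
        exact ⟨hlen', mem_MS.2 ⟨rfl, hm2⟩, mem_MS.2 ⟨rfl, hm1⟩⟩
    · rintro ⟨⟨a, b⟩, M2, M1⟩ hx
      have hx := hx
      simp only [Finset.mem_sigma, Finset.mem_product, Finset.HasAntidiagonal.mem_antidiagonal] at hx
      dsimp only
      rw [pl_decomp (mem_MS.1 hx.2.2).2]
      congr 1
      omega

end Aux

namespace Aux
open Step Finset PowerSeries

lemma mk_cR_eq (r n : ℕ) :
    (PowerSeries.mk fun p : ℕ => (cR r (n : ℤ) (p : ℤ) : ℚ)) = F r n := by
  ext p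
  rw [PowerSeries.coeff_mk, coeff_F]
  congr 1
  rw [cR, if_pos ⟨Int.natCast_nonneg n, Int.natCast_nonneg p⟩]
  have he : {l : List Step // l.length = ((n : ℤ)).toNat ∧ IsMotzkin l
        ∧ plateauCountR r l = ((p : ℤ)).toNat}
      ≃ {l // l ∈ (MS n).filter fun l => plateauCountR r l = p} :=
    Equiv.subtypeEquivRight (fun l => by
      simp only [Int.toNat_natCast, Finset.mem_filter, mem_MS]
      tauto)
  rw [Nat.card_congr he, Nat.card_eq_finsetCard]

theorem main (r : ℕ) (g : PowerSeries (PowerSeries ℚ))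
    (hg : g = PowerSeries.mk fun n => PowerSeries.mk fun p => (cR r n p : ℚ)) :
    g = 1 + PowerSeries.X * g
        + PowerSeries.X ^ 2 * g * (g - PowerSeries.X ^ r
          + PowerSeries.X ^ r * PowerSeries.C (PowerSeries.X : PowerSeries ℚ)) := by
  have hgF : g = PowerSeries.mk fun n => F r n := by
    rw [hg]
    exact PowerSeries.ext fun n => by
      rw [PowerSeries.coeff_mk, PowerSeries.coeff_mk, mk_cR_eq]
  rw [hgF]
  set gF := PowerSeries.mk fun n => F r n with hgFdef
  have hco : ∀ n, PowerSeries.coeff n gF = F r n := fun n => PowerSeries.coeff_mk n _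
  have hcoh : ∀ b, PowerSeries.coeff b
      (gF - PowerSeries.X ^ r + PowerSeries.X ^ r * PowerSeries.C (PowerSeries.X : PowerSeries ℚ))
      = F r b - (if b = r then 1 else 0)
        + (if b = r then (PowerSeries.X : PowerSeries ℚ) else 0) := by
    intro b
    rw [map_add, map_sub, hco, PowerSeries.coeff_X_pow, PowerSeries.coeff_mul_C,
      PowerSeries.coeff_X_pow]
    congr 1
    by_cases hbr : b = r <;> simp [hbr]
  apply PowerSeries.ext
  intro n
  rw [map_add, map_add, PowerSeries.coeff_one]
  have hX2 : PowerSeries.X ^ 2 * gF * (gF - PowerSeries.X ^ r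
      + PowerSeries.X ^ r * PowerSeries.C (PowerSeries.X : PowerSeries ℚ))
      = PowerSeries.X * (PowerSeries.X * (gF * (gF - PowerSeries.X ^ r
      + PowerSeries.X ^ r * PowerSeries.C (PowerSeries.X : PowerSeries ℚ)))) := by ring
  rw [hX2]
  match n with
  | 0 =>
    rw [hco, PowerSeries.coeff_zero_X_mul, PowerSeries.coeff_zero_X_mul, F_zero]
    simp
  | 1 =>
    rw [hco, PowerSeries.coeff_succ_X_mul, PowerSeries.coeff_succ_X_mul,
      PowerSeries.coeff_zero_X_mul, hco, F_zero, F_one]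
    simp
  | (m + 2) =>
    rw [hco, if_neg (by omega), PowerSeries.coeff_succ_X_mul, hco,
      show m + 2 = (m + 1) + 1 from rfl, PowerSeries.coeff_succ_X_mul,
      PowerSeries.coeff_succ_X_mul, PowerSeries.coeff_mul]
    have : ∑ p ∈ Finset.HasAntidiagonal.antidiagonal m, (PowerSeries.coeff p.1 gF) *
        (PowerSeries.coeff p.2 (gF - PowerSeries.X ^ r
          + PowerSeries.X ^ r * PowerSeries.C (PowerSeries.X : PowerSeries ℚ)))
        = ∑ ab ∈ Finset.HasAntidiagonal.antidiagonal m, F r ab.1 *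
            (∑ M ∈ MS ab.2, (PowerSeries.X : PowerSeries ℚ)
              ^ (plateauCountR r M + (if M = List.replicate r H then 1 else 0))) := by
      refine Finset.sum_congr rfl fun ab _ => ?_
      rw [hco, hcoh, G_eq]
    rw [this, F_rec, zero_add]

end Aux


open PowerSeries in
/-- Working in `ℚ[[x,y]]` realized as `(ℚ[[y]])[[x]]`: the outer variable is `x`
and the inner variable is `y`; `g` is the bivariate generating function for
plateaus of length `r`. -/
theorem functional_equation_r (r : ℕ) (hr : 1 ≤ r)
    (g : PowerSeries (PowerSeries ℚ))
    (hg : g = PowerSeries.mk fun n => PowerSeries.mk fun p => (cR r n p : ℚ)) :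
    g = 1 + X * g
        + X ^ 2 * g * (g - X ^ r + X ^ r * (PowerSeries.C (X : PowerSeries ℚ) : PowerSeries (PowerSeries ℚ))) := by
  exact Aux.main r g hg
end

section
/- Let f(x,y) = Σ_{paths P} x^{length(P)} y^{odd(P)} ∈ ℚ[[x,y]], where the sum is over all Motzkin paths P and odd(P) is the number of plateaus of P whose horizontal step is at odd height. Then f satisfies f(x,y)·[(1 - x - x³y + x³)·(1 - x - x²·f(x,y)) - x²] = 1 - x - x²·f(x,y) as formal power series in ℚ[[x,y]]. -/
open scoped Classical

/-- The number of plateaus (occurrences of consecutive steps U, H, D) of a path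
whose horizontal step is at odd height.  The horizontal step of a plateau
starting at position `i` is the step with index `i+1`, and its height is the
number of U steps minus the number of D steps among the first `i+2` steps. -/
noncomputable def oddPlateauCount (l : List Step) : ℕ :=
  ((Finset.range l.length).filter
    (fun i => (l.drop i).take 3 = [Step.U, Step.H, Step.D] ∧
      Odd (((l.take (i + 2)).count Step.U : ℤ) - ((l.take (i + 2)).count Step.D : ℤ)))).card

/-- The number of Motzkin paths of length `n` with exactly `q` plateaus at odd height. -/
noncomputable def oddCount (n q : ℕ) : ℕ :=
  Nat.card {l : List Step // l.length = n ∧ IsMotzkin l ∧ oddPlateauCount l = q}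

namespace MotzkinGF

open Finset

instance : Fintype Step := ⟨{Step.U, Step.H, Step.D}, by intro x; cases x <;> simp⟩

/-- Generalized plateau count: plateaus whose horizontal step's height satisfies `p`. -/
noncomputable def pc (p : ℤ → Prop) (l : List Step) : ℕ :=
  ((Finset.range l.length).filter
    (fun i => (l.drop i).take 3 = [Step.U, Step.H, Step.D] ∧
      p (((l.take (i + 2)).count Step.U : ℤ) - ((l.take (i + 2)).count Step.D : ℤ)))).card

lemma oddPlateauCount_eq (l : List Step) : oddPlateauCount l = pc Odd l := by
  unfold oddPlateauCount pc
  congr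

lemma pc_congr {p q : ℤ → Prop} (h : ∀ d, p d ↔ q d) (l : List Step) : pc p l = pc q l := by
  have : p = q := funext fun d => propext (h d)
  rw [this]

lemma pc_eq_sum (p : ℤ → Prop) (l : List Step) :
    pc p l = ∑ i ∈ Finset.range l.length,
      if ((l.drop i).take 3 = [Step.U, Step.H, Step.D] ∧
        p (((l.take (i + 2)).count Step.U : ℤ) - ((l.take (i + 2)).count Step.D : ℤ)))
      then 1 else 0 := Finset.card_filter _ _

lemma pc_nil (p : ℤ → Prop) : pc p [] = 0 := by simp [pc]

lemma pc_cons_H (p : ℤ → Prop) (l : List Step) : pc p (Step.H :: l) = pc p l := by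
  rw [pc_eq_sum, pc_eq_sum]
  rw [List.length_cons, Finset.sum_range_succ']
  have h0 : ¬(((Step.H :: l).drop 0).take 3 = [Step.U, Step.H, Step.D] ∧
      p ((((Step.H :: l).take (0 + 2)).count Step.U : ℤ) -
        (((Step.H :: l).take (0 + 2)).count Step.D : ℤ))) := by
    rintro ⟨h, -⟩
    rcases l with _ | ⟨s, t⟩ <;> simp_all
  rw [if_neg h0, add_zero]
  refine Finset.sum_congr rfl fun i _ => ?_
  have hd : (Step.H :: l).drop (i + 1) = l.drop i := rfl
  have ht : (Step.H :: l).take (i + 1 + 2) = Step.H :: l.take (i + 2) := rfl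
  rw [hd, ht]
  simp [List.count_cons]

lemma prefix_counts {l r t : List Step} (h : IsMotzkin l) (e : l = r ++ t) :
    r.count Step.D ≤ r.count Step.U := by
  have h1 := h.1 r.length
  rw [e, List.take_append_of_le_length (Nat.le_refl _), List.take_length] at h1
  exact h1

lemma no_UH_suffix {Q : List Step} (hQ : IsMotzkin Q) (r : List Step) :
    Q ≠ r ++ [Step.U, Step.H] := by
  rintro rfl
  have h1 := prefix_counts hQ (r := r) (t := [Step.U, Step.H]) rfl
  have h2 := hQ.2
  simp [List.count_append, List.count_cons] at h1 h2
  omega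

lemma take3_append_D (x P : List Step) :
    ((x ++ Step.D :: P).take 3 = [Step.U, Step.H, Step.D]) ↔
      (x.take 3 = [Step.U, Step.H, Step.D] ∨ x = [Step.U, Step.H]) := by
  rcases x with _ | ⟨s, _ | ⟨t, _ | ⟨u, r⟩⟩⟩ <;> simp [List.take]

lemma take2_eq_HD {Q : List Step} (P : List Step) (hQ : IsMotzkin Q) :
    (Q ++ Step.D :: P).take 2 = [Step.H, Step.D] ↔ Q = [Step.H] := by
  rcases Q with _ | ⟨s, _ | ⟨t, r⟩⟩
  · simp [List.take]
  · simp [List.take]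
  · constructor
    · intro h
      exfalso
      simp [List.take] at h
      obtain ⟨rfl, rfl⟩ := h
      have := hQ.1 2
      simp [List.take, List.count_cons] at this
    · intro h
      exact absurd (congrArg List.length h) (by simp)

lemma pc_cons_U (p : ℤ → Prop) {Q P : List Step} (hQ : IsMotzkin Q) :
    pc p (Step.U :: Q ++ Step.D :: P)
      = ((if Q = [Step.H] ∧ p 1 then 1 else 0) + pc (fun d => p (d + 1)) Q) + pc p P := by
  set l := Step.U :: Q ++ Step.D :: P with hl
  have hl' : l = Step.U :: (Q ++ Step.D :: P) := by rw [hl, List.cons_append]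
  have hlen : l.length = 1 + (Q.length + (1 + P.length)) := by
    simp only [hl', List.length_cons, List.length_append]
    omega
  have hG0 : (if ((l.drop 0).take 3 = [Step.U, Step.H, Step.D] ∧
      p (((l.take (0 + 2)).count Step.U : ℤ) - ((l.take (0 + 2)).count Step.D : ℤ)))
      then 1 else 0) = (if Q = [Step.H] ∧ p 1 then (1:ℕ) else 0) := by
    by_cases hQH : Q = [Step.H]
    · subst hQH
      simp only [hl', List.drop_zero]
      simp +decide [List.take, List.count_cons]
    · have hni : ¬ (l.drop 0).take 3 = [Step.U, Step.H, Step.D] := by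
        rw [List.drop_zero, hl']
        intro hcon
        simp [List.take] at hcon
        exact hQH ((take2_eq_HD P hQ).mp hcon)
      rw [if_neg (fun hc => hni hc.1), if_neg (fun hc => hQH hc.1)]
  have hGQ : ∀ i ∈ Finset.range Q.length,
      (if ((l.drop (1 + i)).take 3 = [Step.U, Step.H, Step.D] ∧
        p (((l.take (1 + i + 2)).count Step.U : ℤ) - ((l.take (1 + i + 2)).count Step.D : ℤ)))
        then 1 else 0)
      = (if ((Q.drop i).take 3 = [Step.U, Step.H, Step.D] ∧
        p ((((Q.take (i + 2)).count Step.U : ℤ) - ((Q.take (i + 2)).count Step.D : ℤ)) + 1))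
        then (1:ℕ) else 0) := by
    intro i hi
    rw [Finset.mem_range] at hi
    have hdrop : l.drop (1 + i) = Q.drop i ++ Step.D :: P := by
      rw [hl', show (1 + i) = i + 1 by omega, List.drop_succ_cons,
        List.drop_append_of_le_length (by omega)]
    have hC : (l.drop (1 + i)).take 3 = [Step.U, Step.H, Step.D] ↔
        (Q.drop i).take 3 = [Step.U, Step.H, Step.D] := by
      rw [hdrop, take3_append_D]
      constructor
      · rintro (h | h)
        · exact h
        · refine absurd ?_ (no_UH_suffix hQ (Q.take i))
          rw [← h]
          exact (List.take_append_drop i Q).symm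
      · exact Or.inl
    by_cases hC2 : (Q.drop i).take 3 = [Step.U, Step.H, Step.D]
    · have hlen3 : i + 2 ≤ Q.length := by
        have := congrArg List.length hC2
        simp [List.length_take] at this
        omega
      have htake : l.take (1 + i + 2) = Step.U :: Q.take (i + 2) := by
        rw [hl', show (1 + i + 2) = (i + 2) + 1 by omega, List.take_succ_cons,
          List.take_append_of_le_length hlen3]
      have harg : ((l.take (1 + i + 2)).count Step.U : ℤ) - ((l.take (1 + i + 2)).count Step.D : ℤ)
          = (((Q.take (i + 2)).count Step.U : ℤ) - ((Q.take (i + 2)).count Step.D : ℤ)) + 1 := by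
        rw [htake]
        simp [List.count_cons]
        push_cast
        ring
      rw [harg]
      exact if_congr (and_congr hC Iff.rfl) rfl rfl
    · rw [if_neg (fun hc => hC2 (hC.mp hc.1)), if_neg (fun hc => hC2 hc.1)]
  have hGD : (if ((l.drop (1 + (Q.length + 0))).take 3 = [Step.U, Step.H, Step.D] ∧
      p (((l.take (1 + (Q.length + 0) + 2)).count Step.U : ℤ) -
        ((l.take (1 + (Q.length + 0) + 2)).count Step.D : ℤ))) then 1 else 0) = (0:ℕ) := by
    have hdrop : l.drop (1 + (Q.length + 0)) = Step.D :: P := by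
      rw [hl', show (1 + (Q.length + 0)) = Q.length + 1 by omega, List.drop_succ_cons]
      have := List.drop_length_add_append (l₁ := Q) (l₂ := Step.D :: P) 0
      simpa using this
    rw [if_neg]
    rintro ⟨hc, -⟩
    rw [hdrop] at hc
    simp [List.take] at hc
  have hGP : ∀ j ∈ Finset.range P.length,
      (if ((l.drop (1 + (Q.length + (1 + j)))).take 3 = [Step.U, Step.H, Step.D] ∧
        p (((l.take (1 + (Q.length + (1 + j)) + 2)).count Step.U : ℤ) -
          ((l.take (1 + (Q.length + (1 + j)) + 2)).count Step.D : ℤ))) then 1 else 0)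
      = (if ((P.drop j).take 3 = [Step.U, Step.H, Step.D] ∧
        p (((P.take (j + 2)).count Step.U : ℤ) - ((P.take (j + 2)).count Step.D : ℤ)))
        then (1:ℕ) else 0) := by
    intro j hj
    rw [Finset.mem_range] at hj
    have hdrop : l.drop (1 + (Q.length + (1 + j))) = P.drop j := by
      rw [hl', show (1 + (Q.length + (1 + j))) = (Q.length + (1 + j)) + 1 by omega,
        List.drop_succ_cons, List.drop_length_add_append (l₁ := Q) (l₂ := Step.D :: P) (1 + j),
        show (1 + j) = j + 1 by omega, List.drop_succ_cons]
    have htake : l.take (1 + (Q.length + (1 + j)) + 2)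
        = Step.U :: (Q ++ Step.D :: P.take (j + 2)) := by
      rw [hl', show (1 + (Q.length + (1 + j)) + 2) = (Q.length + (j + 3)) + 1 by omega,
        List.take_succ_cons, List.take_length_add_append (l₁ := Q) (l₂ := Step.D :: P) (j + 3),
        show (j + 3) = (j + 2) + 1 by omega, List.take_succ_cons]
    have harg : ((l.take (1 + (Q.length + (1 + j)) + 2)).count Step.U : ℤ) -
        ((l.take (1 + (Q.length + (1 + j)) + 2)).count Step.D : ℤ)
        = ((P.take (j + 2)).count Step.U : ℤ) - ((P.take (j + 2)).count Step.D : ℤ) := by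
      rw [htake]
      have h2 := hQ.2
      simp [List.count_cons, List.count_append]
      push_cast
      omega
    rw [hdrop, harg]
  calc pc p l = ∑ i ∈ Finset.range (1 + (Q.length + (1 + P.length))),
        (if ((l.drop i).take 3 = [Step.U, Step.H, Step.D] ∧
          p (((l.take (i + 2)).count Step.U : ℤ) - ((l.take (i + 2)).count Step.D : ℤ)))
          then 1 else 0) := by rw [pc_eq_sum, hlen]
    _ = ((if Q = [Step.H] ∧ p 1 then 1 else 0) + pc (fun d => p (d + 1)) Q) + pc p P := by
        rw [Finset.sum_range_add, Finset.sum_range_add, Finset.sum_range_add,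
          Finset.sum_range_one, Finset.sum_range_one]
        rw [hG0, hGD, Finset.sum_congr rfl hGQ, Finset.sum_congr rfl hGP,
          pc_eq_sum (fun d => p (d + 1)) Q, pc_eq_sum p P]
        omega

lemma isMotzkin_nil : IsMotzkin ([] : List Step) := ⟨fun k => by simp, rfl⟩

lemma isMotzkin_cons_H {l : List Step} : IsMotzkin (Step.H :: l) ↔ IsMotzkin l := by
  constructor
  · intro h
    refine ⟨fun k => ?_, ?_⟩
    · have := h.1 (k + 1)
      simpa [List.count_cons] using this
    · have := h.2
      simpa [List.count_cons] using this
  · intro h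
    refine ⟨fun k => ?_, by simpa [List.count_cons] using h.2⟩
    cases k with
    | zero => simp
    | succ k => simpa [List.count_cons] using h.1 k

lemma isMotzkin_UQDP {Q P : List Step} (hQ : IsMotzkin Q) (hP : IsMotzkin P) :
    IsMotzkin (Step.U :: Q ++ Step.D :: P) := by
  constructor
  · intro k
    cases k with
    | zero => simp
    | succ k =>
      rw [List.cons_append, List.take_succ_cons]
      by_cases hk : k ≤ Q.length
      · rw [List.take_append_of_le_length hk]
        have := hQ.1 k
        simp [List.count_cons]
        omega
      · have hk2 : k = Q.length + ((k - Q.length - 1) + 1) := by omega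
        rw [hk2, List.take_length_add_append, List.take_succ_cons]
        have h1 := hQ.2
        have h2 := hP.1 (k - Q.length - 1)
        simp [List.count_cons, List.count_append]
        omega
  · have h1 := hQ.2
    have h2 := hP.2
    simp [List.count_cons, List.count_append]
    omega

lemma exists_decomp {t : List Step} (h : IsMotzkin (Step.U :: t)) :
    ∃ Q P, t = Q ++ Step.D :: P ∧ IsMotzkin Q ∧ IsMotzkin P := by
  have htot : t.count Step.U + 1 = t.count Step.D := by
    have := h.2
    simp [List.count_cons] at this
    omega
  have hex : ∃ k, (t.take k).count Step.U < (t.take k).count Step.D := by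
    refine ⟨t.length, ?_⟩
    rw [List.take_length]
    omega
  have hle : Nat.find hex ≤ t.length := Nat.find_le (by rw [List.take_length]; omega)
  obtain ⟨m, hm⟩ : ∃ m, Nat.find hex = m + 1 := by
    refine ⟨Nat.find hex - 1, ?_⟩
    have hpos : Nat.find hex ≠ 0 := by
      intro h0
      have := Nat.find_spec hex
      rw [h0] at this
      simp at this
    omega
  have hspec := Nat.find_spec hex
  rw [hm] at hspec
  have hm_lt : m < t.length := by omega
  have hnot : ¬ ((t.take m).count Step.U < (t.take m).count Step.D) :=
    Nat.find_min hex (by omega)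
  have hsplit : t.take (m + 1) = t.take m ++ [t[m]] := by
    rw [List.take_succ, List.getElem?_eq_getElem hm_lt]
    rfl
  have hD : t[m] = Step.D := by
    rcases e : t[m] with _ | _ | _ <;>
      rw [hsplit, e] at hspec <;>
      simp [List.count_append, List.count_cons] at hspec <;>
      omega
  have hQD : t = t.take m ++ Step.D :: t.drop (m + 1) := by
    conv_lhs => rw [← List.take_append_drop m t]
    rw [List.drop_eq_getElem_cons hm_lt, hD]
  have hQlen : (t.take m).length = m := by
    rw [List.length_take]
    omega
  have hQcnt : (t.take m).count Step.U = (t.take m).count Step.D := by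
    rw [hsplit, hD] at hspec
    simp [List.count_append, List.count_cons] at hspec
    omega
  refine ⟨t.take m, t.drop (m + 1), hQD, ⟨fun k => ?_, hQcnt.symm ▸ hQcnt⟩, ⟨fun k => ?_, ?_⟩⟩
  · rw [List.take_take]
    have := Nat.find_min hex (show min k m < Nat.find hex by omega)
    omega
  · have hpre := h.1 (m + 2 + k)
    rw [show m + 2 + k = (m + 1 + k) + 1 by omega, List.take_succ_cons] at hpre
    have htk : t.take (m + 1 + k) = t.take m ++ Step.D :: (t.drop (m + 1)).take k := by
      conv_lhs => rw [hQD]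
      rw [show m + 1 + k = (t.take m).length + (1 + k) by omega, List.take_length_add_append,
        show 1 + k = k + 1 by omega, List.take_succ_cons]
    rw [htk] at hpre
    simp [List.count_append, List.count_cons] at hpre
    omega
  · have hcnt : t.count Step.U = (t.take m).count Step.U + (t.drop (m+1)).count Step.U ∧
        t.count Step.D = (t.take m).count Step.D + 1 + (t.drop (m+1)).count Step.D := by
      constructor <;> (conv_lhs => rw [hQD]) <;> simp [List.count_append, List.count_cons] <;> omega
    omega

lemma decomp_unique {Q1 P1 Q2 P2 : List Step} (h1 : IsMotzkin Q1) (h2 : IsMotzkin Q2)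
    (e : Q1 ++ Step.D :: P1 = Q2 ++ Step.D :: P2) : Q1 = Q2 ∧ P1 = P2 := by
  have key : ∀ (A1 B1 A2 B2 : List Step), IsMotzkin A1 → IsMotzkin A2 →
      A1 ++ Step.D :: B1 = A2 ++ Step.D :: B2 → A1.length < A2.length → False := by
    intro A1 B1 A2 B2 g1 g2 he hlen
    have htake := congrArg (List.take (A1.length + 1)) he
    rw [List.take_length_add_append (l₁ := A1) 1, List.take_append_of_le_length (by omega)] at htake
    have hc := prefix_counts ⟨g2.1, g2.2⟩ (r := A2.take (A1.length + 1))
      (t := A2.drop (A1.length + 1)) (List.take_append_drop _ _).symm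
    rw [← htake] at hc
    have := g1.2
    simp [List.count_append, List.count_cons, List.take] at hc
    omega
  have hlen : Q1.length = Q2.length := by
    rcases lt_trichotomy Q1.length Q2.length with hl | hl | hl
    · exact absurd (key Q1 P1 Q2 P2 h1 h2 e hl) id
    · exact hl
    · exact absurd (key Q2 P2 Q1 P1 h2 h1 e.symm hl) id
  obtain ⟨hQ, hrest⟩ := List.append_inj e hlen
  exact ⟨hQ, by injection hrest⟩

def allLists : ℕ → Finset (List Step)
  | 0 => {[]}
  | n + 1 => (Finset.univ (α := Step) ×ˢ allLists n).image fun p => p.1 :: p.2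

lemma mem_allLists : ∀ (n : ℕ) (l : List Step), l ∈ allLists n ↔ l.length = n
  | 0, l => by simp [allLists, List.length_eq_zero_iff]
  | n + 1, l => by
    cases l with
    | nil => simp [allLists]
    | cons s t => simp [allLists, mem_allLists n t]

noncomputable def ML (n : ℕ) : Finset (List Step) := (allLists n).filter IsMotzkin

lemma mem_ML {n : ℕ} {l : List Step} : l ∈ ML n ↔ l.length = n ∧ IsMotzkin l := by
  simp [ML, mem_allLists]

lemma ML_zero : ML 0 = {[]} := by
  ext l
  simp only [mem_ML, Finset.mem_singleton, List.length_eq_zero_iff]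
  exact ⟨fun h => h.1, fun h => ⟨h, h ▸ isMotzkin_nil⟩⟩

lemma isMotzkin_single_H : IsMotzkin [Step.H] := isMotzkin_cons_H.mpr isMotzkin_nil

lemma ML_one : ML 1 = {[Step.H]} := by
  ext l
  simp only [mem_ML, Finset.mem_singleton]
  constructor
  · rintro ⟨hlen, hm⟩
    rcases l with _ | ⟨s, _ | ⟨t, r⟩⟩ <;> simp at hlen
    cases s
    · exfalso
      have := hm.2
      simp [List.count_cons] at this
    · rfl
    · exfalso
      have := hm.1 1
      simp [List.count_cons, List.take] at this
  · rintro rfl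
    exact ⟨rfl, isMotzkin_single_H⟩

noncomputable def W (p : ℤ → Prop) (n : ℕ) : PowerSeries ℚ :=
  ∑ l ∈ ML n, (PowerSeries.X : PowerSeries ℚ) ^ pc p l

lemma W_zero (p : ℤ → Prop) : W p 0 = 1 := by
  simp [W, ML_zero, pc_nil]

lemma pc_single_H (p : ℤ → Prop) : pc p [Step.H] = 0 := by
  rw [pc, show (List.length [Step.H]) = 1 from rfl, Finset.range_one, Finset.filter_singleton,
    if_neg]
  · simp
  · rintro ⟨hc, -⟩
    simp [List.take] at hc

lemma W_one (p : ℤ → Prop) : W p 1 = 1 := by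
  simp [W, ML_one, pc_single_H]

lemma W_rec (p : ℤ → Prop) (n : ℕ) :
    W p (n + 2) = W p (n + 1) + ∑ ab ∈ Finset.HasAntidiagonal.antidiagonal n,
      (∑ Q ∈ ML ab.1, (PowerSeries.X : PowerSeries ℚ)
          ^ (pc (fun d => p (d + 1)) Q + (if Q = [Step.H] ∧ p 1 then 1 else 0)))
        * W p ab.2 := by
  classical
  set S1 := (ML (n + 1)).image (fun t => Step.H :: t) with hS1
  set S2 := ((Finset.HasAntidiagonal.antidiagonal n).sigma fun ab => ML ab.1 ×ˢ ML ab.2).image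
      (fun x => Step.U :: x.2.1 ++ Step.D :: x.2.2) with hS2
  have hunion : ML (n + 2) = S1 ∪ S2 := by
    ext l
    simp only [Finset.mem_union, hS1, hS2, Finset.mem_image, Finset.mem_sigma,
      Finset.mem_product, Finset.HasAntidiagonal.mem_antidiagonal]
    rw [mem_ML]
    constructor
    · rintro ⟨hlen, hm⟩
      rcases l with _ | ⟨s, t⟩
      · simp at hlen
      cases s
      · -- U
        obtain ⟨Q, P, rfl, hQ, hP⟩ := exists_decomp hm
        right
        refine ⟨⟨(Q.length, P.length), (Q, P)⟩, ⟨?_, mem_ML.mpr ⟨rfl, hQ⟩, mem_ML.mpr ⟨rfl, hP⟩⟩,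
          by rw [List.cons_append]⟩
        show Q.length + P.length = n
        simp only [List.length_cons, List.length_append, List.length_cons] at hlen
        omega
      · -- H
        left
        exact ⟨t, mem_ML.mpr ⟨by simpa using hlen, isMotzkin_cons_H.mp hm⟩, rfl⟩
      · -- D
        exfalso
        have := hm.1 1
        simp [List.count_cons, List.take] at this
    · rintro (⟨t, ht, rfl⟩ | ⟨⟨⟨a, b⟩, Q, P⟩, ⟨hab, hQ, hP⟩, rfl⟩)
      · obtain ⟨hlen, hm⟩ := mem_ML.mp ht
        exact ⟨by simp [hlen], isMotzkin_cons_H.mpr hm⟩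
      · dsimp only at hab hQ hP ⊢
        obtain ⟨hQl, hQm⟩ := mem_ML.mp hQ
        obtain ⟨hPl, hPm⟩ := mem_ML.mp hP
        refine ⟨?_, isMotzkin_UQDP hQm hPm⟩
        subst hQl hPl
        simp only [List.cons_append, List.length_cons, List.length_append, List.length_cons]
        omega
  have hdisj : Disjoint S1 S2 := by
    rw [Finset.disjoint_left]
    rintro l hl1 hl2
    simp only [hS1, hS2, Finset.mem_image] at hl1 hl2
    obtain ⟨t, -, rfl⟩ := hl1
    obtain ⟨x, -, hx⟩ := hl2
    rw [List.cons_append] at hx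
    exact Step.noConfusion (List.head_eq_of_cons_eq hx)
  have hsum : W p (n + 2) = (∑ l ∈ S1, (PowerSeries.X : PowerSeries ℚ) ^ pc p l)
      + ∑ l ∈ S2, (PowerSeries.X : PowerSeries ℚ) ^ pc p l := by
    rw [W, hunion, Finset.sum_union hdisj]
  rw [hsum]
  congr 1
  · -- S1 part
    rw [hS1, Finset.sum_image (fun x _ y _ h => by injection h)]
    exact Finset.sum_congr rfl fun t _ => by rw [pc_cons_H]
  · -- S2 part
    have hinj : ∀ x ∈ (Finset.HasAntidiagonal.antidiagonal n).sigma fun ab => ML ab.1 ×ˢ ML ab.2,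
        ∀ y ∈ (Finset.HasAntidiagonal.antidiagonal n).sigma fun ab => ML ab.1 ×ˢ ML ab.2,
        (Step.U :: x.2.1 ++ Step.D :: x.2.2) = (Step.U :: y.2.1 ++ Step.D :: y.2.2) → x = y := by
      rintro ⟨⟨a1, b1⟩, Q1, P1⟩ hx ⟨⟨a2, b2⟩, Q2, P2⟩ hy he
      dsimp only at hx hy he ⊢
      simp only [Finset.mem_sigma, Finset.mem_product, Finset.HasAntidiagonal.mem_antidiagonal] at hx hy
      obtain ⟨-, hQ1, hP1⟩ := hx
      obtain ⟨-, hQ2, hP2⟩ := hy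
      rw [List.cons_append, List.cons_append] at he
      have he' := List.tail_eq_of_cons_eq he
      obtain ⟨hQ, hP⟩ := decomp_unique (mem_ML.mp hQ1).2 (mem_ML.mp hQ2).2 he'
      obtain ⟨ha1, -⟩ := mem_ML.mp hQ1
      obtain ⟨ha2, -⟩ := mem_ML.mp hQ2
      obtain ⟨hb1, -⟩ := mem_ML.mp hP1
      obtain ⟨hb2, -⟩ := mem_ML.mp hP2
      subst hQ hP
      have e1 : a1 = a2 := by omega
      have e2 : b1 = b2 := by omega
      subst e1 e2
      rfl
    rw [hS2, Finset.sum_image hinj, Finset.sum_sigma]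
    refine Finset.sum_congr rfl fun ab hab => ?_
    rw [W, Finset.sum_mul_sum]
    rw [Finset.sum_product]
    refine Finset.sum_congr rfl fun Q hQ => ?_
    refine Finset.sum_congr rfl fun P hP => ?_
    rw [pc_cons_U p (mem_ML.mp hQ).2, pow_add, pow_add]
    ring

/-- Even-height predicate (as "odd of d+1"). -/
def pE : ℤ → Prop := fun d => Odd (d + 1)

lemma W_congr {p q : ℤ → Prop} (h : ∀ d, p d ↔ q d) (n : ℕ) : W p n = W q n :=
  Finset.sum_congr rfl fun Q _ => by rw [pc_congr h]

lemma inner_gen (p : ℤ → Prop) (hp : p 1) (a : ℕ) :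
    (∑ Q ∈ ML a, (PowerSeries.X : PowerSeries ℚ)
      ^ (pc (fun d => p (d + 1)) Q + if Q = [Step.H] ∧ p 1 then 1 else 0))
    = W (fun d => p (d + 1)) a + (if a = 1 then (PowerSeries.X : PowerSeries ℚ) - 1 else 0) := by
  by_cases ha : a = 1
  · subst ha
    rw [ML_one, Finset.sum_singleton, pc_single_H, if_pos ⟨rfl, hp⟩, W_one, if_pos rfl]
    rw [zero_add, pow_one]
    ring
  · rw [if_neg ha, add_zero, W]
    refine Finset.sum_congr rfl fun Q hQ => ?_
    have hne : Q ≠ [Step.H] := by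
      intro h
      obtain ⟨hl, -⟩ := mem_ML.mp hQ
      rw [h] at hl
      simp at hl
      exact ha hl.symm
    rw [if_neg (fun hc => hne hc.1), add_zero]

lemma inner_gen0 (p : ℤ → Prop) (hp : ¬ p 1) (a : ℕ) :
    (∑ Q ∈ ML a, (PowerSeries.X : PowerSeries ℚ)
      ^ (pc (fun d => p (d + 1)) Q + if Q = [Step.H] ∧ p 1 then 1 else 0))
    = W (fun d => p (d + 1)) a := by
  rw [W]
  refine Finset.sum_congr rfl fun Q hQ => ?_
  rw [if_neg (fun hc => hp hc.2), add_zero]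

lemma W_rec_odd (n : ℕ) :
    W Odd (n + 2) = W Odd (n + 1) + ∑ ab ∈ Finset.HasAntidiagonal.antidiagonal n,
      (W pE ab.1 + (if ab.1 = 1 then (PowerSeries.X : PowerSeries ℚ) - 1 else 0))
        * W Odd ab.2 := by
  rw [W_rec Odd n]
  congr 1
  refine Finset.sum_congr rfl fun ab _ => ?_
  rw [inner_gen Odd ⟨0, by ring⟩ ab.1]
  rfl

lemma W_rec_E (n : ℕ) :
    W pE (n + 2) = W pE (n + 1) + ∑ ab ∈ Finset.HasAntidiagonal.antidiagonal n,
      W Odd ab.1 * W pE ab.2 := by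
  rw [W_rec pE n]
  congr 1
  refine Finset.sum_congr rfl fun ab _ => ?_
  have hp : ¬ pE 1 := by
    intro h
    simp only [pE] at h
    rw [Int.odd_iff] at h
    omega
  rw [inner_gen0 pE hp ab.1, W_congr (p := fun d => pE (d + 1)) (q := Odd) ?_ ab.1]
  intro d
  simp only [pE]
  rw [Int.odd_iff, Int.odd_iff]
  omega

noncomputable def FS : PowerSeries (PowerSeries ℚ) := PowerSeries.mk (W Odd)
noncomputable def GS : PowerSeries (PowerSeries ℚ) := PowerSeries.mk (W pE)

lemma sum_ite_one (c : PowerSeries ℚ) (F : ℕ → PowerSeries ℚ) (m : ℕ) :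
    ∑ ab ∈ Finset.HasAntidiagonal.antidiagonal m, (if ab.1 = 1 then c else 0) * F ab.2
      = if 1 ≤ m then c * F (m - 1) else 0 := by
  rcases m with _ | m'
  · simp
  · rw [if_pos (by omega)]
    rw [Finset.sum_eq_single (1, m')]
    · simp
    · rintro ⟨x, y⟩ hxy hne
      rw [Finset.HasAntidiagonal.mem_antidiagonal] at hxy
      have hx : x ≠ 1 := by
        intro hx
        apply hne
        subst hx
        have : y = m' := by omega
        subst this
        rfl
      simp [hx]
    · intro hni
      exact absurd (Finset.HasAntidiagonal.mem_antidiagonal.mpr (by omega)) hni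

lemma hA_eq : FS = 1 + PowerSeries.X ^ 1 * FS + PowerSeries.X ^ 2 * (GS * FS)
    + PowerSeries.X ^ 3 * ((PowerSeries.C (R := PowerSeries ℚ) PowerSeries.X - 1) * FS) := by
  ext n
  simp only [map_add, PowerSeries.coeff_one, PowerSeries.coeff_X_pow_mul',
    FS, GS, PowerSeries.coeff_mk]
  rcases n with _ | _ | m
  · norm_num [W_zero]
  · norm_num [W_zero, W_one]
  · rw [if_neg (by omega), if_pos (by omega), if_pos (by omega)]
    rw [show m + 2 - 1 = m + 1 by omega, show m + 2 - 2 = m by omega]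
    rw [W_rec_odd m]
    rw [PowerSeries.coeff_mul]
    simp only [FS, GS, PowerSeries.coeff_mk]
    have hsum : ∑ ab ∈ Finset.HasAntidiagonal.antidiagonal m,
        (W pE ab.1 + (if ab.1 = 1 then (PowerSeries.X : PowerSeries ℚ) - 1 else 0))
          * W Odd ab.2
        = (∑ ab ∈ Finset.HasAntidiagonal.antidiagonal m, W pE ab.1 * W Odd ab.2)
          + (if 1 ≤ m then ((PowerSeries.X : PowerSeries ℚ) - 1) * W Odd (m - 1) else 0) := by
      rw [← sum_ite_one ((PowerSeries.X : PowerSeries ℚ) - 1) (W Odd) m,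
        ← Finset.sum_add_distrib]
      exact Finset.sum_congr rfl fun ab _ => by ring
    rw [hsum]
    by_cases hm : 1 ≤ m
    · rw [if_pos hm, if_pos (by omega : 3 ≤ m + 2), show m + 2 - 3 = m - 1 by omega]
      have hc : (PowerSeries.coeff (R := PowerSeries ℚ) (m - 1))
          ((PowerSeries.C (R := PowerSeries ℚ) PowerSeries.X - 1) * PowerSeries.mk (W Odd))
          = PowerSeries.X * W Odd (m - 1) - W Odd (m - 1) := by
        rw [sub_mul, one_mul, map_sub, PowerSeries.coeff_C_mul, PowerSeries.coeff_mk]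
      rw [hc]
      rw [show ((PowerSeries.X : PowerSeries ℚ) - 1) * W Odd (m - 1)
          = PowerSeries.X * W Odd (m - 1) - W Odd (m - 1) by ring]
      simp only [map_add, map_sub, map_zero]
      ring
    · rw [if_neg hm, if_neg (by omega : ¬ 3 ≤ m + 2)]
      simp only [map_add, map_zero]
      ring

lemma hB_eq : GS = 1 + PowerSeries.X ^ 1 * GS + PowerSeries.X ^ 2 * (FS * GS) := by
  ext n
  simp only [map_add, PowerSeries.coeff_one, PowerSeries.coeff_X_pow_mul',
    FS, GS, PowerSeries.coeff_mk]
  rcases n with _ | _ | m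
  · norm_num [W_zero]
  · norm_num [W_zero, W_one]
  · rw [if_neg (by omega), if_pos (by omega), if_pos (by omega)]
    rw [show m + 2 - 1 = m + 1 by omega, show m + 2 - 2 = m by omega]
    rw [W_rec_E m, PowerSeries.coeff_mul]
    simp only [FS, GS, PowerSeries.coeff_mk]
    simp only [map_add, map_zero]
    ring

lemma link (n : ℕ) : (PowerSeries.mk fun q => (oddCount n q : ℚ)) = W Odd n := by
  ext q
  rw [PowerSeries.coeff_mk, W, map_sum]
  rw [Finset.sum_congr rfl (fun l _ => PowerSeries.coeff_X_pow q (pc Odd l)),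
    Finset.sum_boole]
  have hcard : oddCount n q = ((ML n).filter fun l => q = pc Odd l).card := by
    have hiff : ∀ l : List Step, (l.length = n ∧ IsMotzkin l ∧ oddPlateauCount l = q)
        ↔ l ∈ (ML n).filter (fun l => q = pc Odd l) := by
      intro l
      rw [Finset.mem_filter, mem_ML, oddPlateauCount_eq]
      constructor
      · rintro ⟨h1, h2, h3⟩
        exact ⟨⟨h1, h2⟩, h3.symm⟩
      · rintro ⟨⟨h1, h2⟩, h3⟩
        exact ⟨h1, h2, h3.symm⟩
    rw [oddCount, Nat.card_congr (Equiv.subtypeEquivRight hiff), Nat.card_eq_finsetCard]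
  rw [hcard]

end MotzkinGF

open PowerSeries in
/-- Working in `ℚ[[x,y]]` realized as `(ℚ[[y]])[[x]]`: the outer variable is `x`
and the inner variable is `y`; `f` is the generating function for Motzkin paths
in which plateaus at odd height are weighted by `y`. -/
theorem odd_height_plateau_gf
    (f : PowerSeries (PowerSeries ℚ))
    (hf : f = PowerSeries.mk fun n => PowerSeries.mk fun q => (oddCount n q : ℚ)) :
    f * ((1 - X - X ^ 3 * PowerSeries.C (R := PowerSeries ℚ) X + X ^ 3)
          * (1 - X - X ^ 2 * f) - X ^ 2)
      = 1 - X - X ^ 2 * f := by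
  have hfF : f = MotzkinGF.FS := by
    rw [hf, MotzkinGF.FS]
    exact congrArg PowerSeries.mk (funext fun n => MotzkinGF.link n)
  rw [hfF]
  have hB' : MotzkinGF.GS * (1 - X - X ^ 2 * MotzkinGF.FS) = 1 := by
    linear_combination MotzkinGF.hB_eq
  linear_combination (1 - X - X ^ 2 * MotzkinGF.FS) * MotzkinGF.hA_eq
    + X ^ 2 * MotzkinGF.FS * hB'
end

section
/- Let G(x,y,z) = Σ_{paths P} x^{length(P)} y^{u(P)} z^{v(P)} ∈ ℚ[[x,y,z]], where the sum is over all Motzkin paths P containing no occurrence of a U step followed by three or more consecutive H steps followed by a D step, u(P) is the number of occurrences of consecutive steps U,H,D in P, and v(P) is the number of occurrences of consecutive steps U,H,H,D in P. Then G satisfies (1 - x)·(G - 1 - x·G) = x²·G·[(1 - x)·(G + xy - x + x²z - x²) - x³] as formal power series in ℚ[[x,y,z]]. -/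
instance : Fintype Step := ⟨{.U, .H, .D}, by intro x; cases x <;> decide⟩

/-- The number of Motzkin paths of length `n` having no plateau of length three
or more, with exactly `u` plateaus of length one (occurrences of U,H,D) and
exactly `v` plateaus of length two (occurrences of U,H,H,D). -/
noncomputable def w (n u v : ℕ) : ℕ :=
  Nat.card {l : List Step // l.length = n ∧ IsMotzkin l ∧
    (∀ r : ℕ, 3 ≤ r → plateauCountR r l = 0) ∧
    plateauCountR 1 l = u ∧ plateauCountR 2 l = v}

namespace Step
open Finset

/-! ### balance -/

def bal (l : List Step) : ℤ := (l.count Step.U : ℤ) - l.count Step.D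

@[simp] lemma bal_nil : bal [] = 0 := by simp [bal]

@[simp] lemma bal_append (l₁ l₂ : List Step) : bal (l₁ ++ l₂) = bal l₁ + bal l₂ := by
  simp [bal, List.count_append]; ring

@[simp] lemma bal_cons (s : Step) (l : List Step) :
    bal (s :: l) = (if s = U then 1 else 0) - (if s = D then 1 else 0) + bal l := by
  cases s <;> simp [bal, List.count_cons] <;> ring

@[simp] lemma bal_replicate_H (k : ℕ) : bal (List.replicate k H) = 0 := by
  simp [bal, List.count_replicate]

lemma isMotzkin_iff (l : List Step) :
    IsMotzkin l ↔ (∀ k : ℕ, 0 ≤ bal (l.take k)) ∧ bal l = 0 := by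
  unfold IsMotzkin bal
  constructor
  · rintro ⟨h1, h2⟩
    exact ⟨fun k => by have := h1 k; omega, by omega⟩
  · rintro ⟨h1, h2⟩
    refine ⟨fun k => ?_, ?_⟩
    · have := h1 k; omega
    · omega

/-! ### plateau counting basics -/

def pat (r : ℕ) : List Step := Step.U :: (List.replicate r Step.H ++ [Step.D])

lemma pat_length (r : ℕ) : (pat r).length = r + 2 := by simp [pat]

lemma pc_eq_sum (r : ℕ) (l : List Step) :
    plateauCountR r l = ∑ i ∈ range l.length,
      (if (l.drop i).take (r+2) = pat r then 1 else 0) :=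
  Finset.card_filter _ _

lemma match_le {r i : ℕ} {l : List Step} (h : (l.drop i).take (r+2) = pat r) :
    i + (r + 2) ≤ l.length := by
  have := congrArg List.length h
  rw [pat_length] at this
  simp only [List.length_take, List.length_drop] at this
  omega

lemma pc_eq_sum' (r : ℕ) (l : List Step) {N : ℕ} (hN : l.length ≤ N) :
    plateauCountR r l = ∑ i ∈ range N,
      (if (l.drop i).take (r+2) = pat r then 1 else 0) := by
  rw [pc_eq_sum]
  refine Finset.sum_subset (Finset.range_subset_range.2 hN) (fun i _ hi => ?_)
  rw [if_neg (fun hm => ?_)]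
  have := match_le hm
  simp only [Finset.mem_range, not_lt] at hi
  omega

lemma pc_zero_of_short {r : ℕ} {l : List Step} (h : l.length < r + 2) :
    plateauCountR r l = 0 := by
  rw [pc_eq_sum]
  refine Finset.sum_eq_zero (fun i hi => ?_)
  rw [if_neg (fun hm => ?_)]
  have := match_le hm
  omega

lemma pc_cons (r : ℕ) (s : Step) (l : List Step) :
    plateauCountR r (s :: l)
      = (if (s :: l).take (r+2) = pat r then 1 else 0) + plateauCountR r l := by
  rw [pc_eq_sum, pc_eq_sum]
  simp only [List.length_cons]
  rw [Finset.sum_range_succ']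
  simp only [List.drop_succ_cons, List.drop_zero]
  ring

lemma sum_range_add {M : Type*} [AddCommMonoid M] (f : ℕ → M) (m n : ℕ) :
    ∑ i ∈ range (m + n), f i = (∑ i ∈ range m, f i) + ∑ i ∈ range n, f (m + i) := by
  induction n with
  | zero => simp
  | succ n ih => rw [← Nat.add_assoc, Finset.sum_range_succ, ih, Finset.sum_range_succ, add_assoc]

end Step

namespace Step
open Finset

@[simp] lemma bal_singleton (s : Step) :
    bal [s] = (if s = U then 1 else 0) - (if s = D then 1 else 0) := by
  cases s <;> simp [bal]

lemma no_U_H_suffix {Q : List Step} (hQ : IsMotzkin Q) (i r : ℕ) :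
    Q.drop i ≠ U :: List.replicate r H := by
  intro h
  rw [isMotzkin_iff] at hQ
  have h1 : 0 ≤ bal (Q.take i) := hQ.1 i
  have h2 : bal Q = 0 := hQ.2
  have h3 : bal (Q.take i) + bal (Q.drop i) = 0 := by
    rw [← bal_append, List.take_append_drop, h2]
  rw [h, bal_cons] at h3
  simp at h3
  omega

lemma take_eq_pat_iff {r : ℕ} {Q P : List Step} (hQ : IsMotzkin Q) :
    (U :: (Q ++ D :: P)).take (r+2) = pat r ↔ Q = List.replicate r H := by
  have hbQpre : ∀ k, 0 ≤ bal (Q.take k) := ((isMotzkin_iff Q).1 hQ).1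
  rw [show r + 2 = (r+1) + 1 by ring, List.take_succ_cons, pat]
  rw [List.cons_eq_cons]
  simp only [true_and]
  constructor
  · intro h
    rcases lt_trichotomy Q.length r with hlt | heq | hgt
    · -- |Q| < r : contradiction via count of D in a prefix
      exfalso
      have hL : (Q ++ D :: P).take (r+1) = Q ++ (D :: P).take (r+1-Q.length) := by
        rw [List.take_append, List.take_of_length_le (by omega)]
      have hsplit : (D :: P).take (r+1-Q.length) = D :: P.take (r-Q.length) := by
        have : r+1-Q.length = (r - Q.length) + 1 := by omega
        rw [this, List.take_succ_cons]
      rw [hL, hsplit] at h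
      -- take (Q.length + 1) of both sides
      have h2 : (Q ++ D :: P.take (r - Q.length)).take (Q.length+1) = Q ++ [D] := by
        rw [List.take_append, List.take_of_length_le (by omega),
          show Q.length + 1 - Q.length = 1 by omega]
        simp
      have h3 : (List.replicate r Step.H ++ [Step.D]).take (Q.length+1)
          = List.replicate (min (Q.length+1) r) Step.H := by
        rw [List.take_append_of_le_length (by simp; omega), List.take_replicate]
      have h4 := congrArg (fun l => List.count Step.D (l.take (Q.length+1))) h
      simp only [h2, h3] at h4
      simp [List.count_append, List.count_replicate] at h4
    · -- |Q| = r : append_inj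
      have hL : (Q ++ D :: P).take (r+1) = Q ++ [D] := by
        rw [List.take_append, List.take_of_length_le (by omega), heq,
          show r + 1 - r = 1 by omega]
        simp
      rw [hL] at h
      have := List.append_inj h (by simp [heq])
      exact this.1
    · -- |Q| > r : Motzkin violated
      exfalso
      rw [List.take_append_of_le_length (by omega)] at h
      have hb := hbQpre (r+1)
      rw [h, bal_append] at hb
      simp at hb
  · intro h
    subst h
    rw [List.take_append, List.take_of_length_le (by simp),
      List.length_replicate, show r + 1 - r = 1 by omega]
    simp

lemma match_inner {r i : ℕ} {Q P : List Step} (hQ : IsMotzkin Q) (hi : i < Q.length) :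
    ((Q ++ D :: P).drop i).take (r+2) = pat r ↔ (Q.drop i).take (r+2) = pat r := by
  have hbQpre : ∀ k, 0 ≤ bal (Q.take k) := ((isMotzkin_iff Q).1 hQ).1
  rw [List.drop_append_of_le_length (le_of_lt hi)]
  set L := Q.length - i with hLdef
  have hLlen : (Q.drop i).length = L := by simp [hLdef]
  have hL1 : 1 ≤ L := by omega
  rcases le_or_gt (r+2) L with hge | hlt
  · rw [List.take_append_of_le_length (by omega)]
  · constructor
    · intro h
      exfalso
      have hsplit : (Q.drop i ++ D :: P).take (r+2) = Q.drop i ++ (D :: P).take (r+2-L) := by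
        rw [List.take_append, List.take_of_length_le (by omega), hLlen]
      rcases eq_or_lt_of_le (show L ≤ r + 1 by omega) with hLr1 | hLr
      · -- L = r+1 : suffix U :: H^r
        have : (D :: P).take (r+2-L) = [D] := by rw [show r+2-L = 1 by omega]; simp
        rw [hsplit, this, pat] at h
        have h' : Q.drop i ++ [D] = (U :: List.replicate r H) ++ [D] := by
          rw [h]; simp
        have := (List.append_inj h' (by simp [hLlen]; omega)).1
        exact no_U_H_suffix hQ i r this
      · -- L ≤ r : count D mismatch at position L
        have hsplit2 : (D :: P).take (r+2-L) = D :: P.take (r+1-L) := by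
          rw [show r+2-L = (r+1-L)+1 by omega, List.take_succ_cons]
        rw [hsplit, hsplit2] at h
        have h2 : (Q.drop i ++ D :: P.take (r+1-L)).take (L+1) = Q.drop i ++ [D] := by
          rw [List.take_append, List.take_of_length_le (by omega),
            hLlen, show L + 1 - L = 1 by omega]
          simp
        have h3 : (pat r).take (L+1) = U :: List.replicate (min L r) Step.H := by
          rw [pat, List.take_succ_cons, List.take_append_of_le_length (by simp; omega),
            List.take_replicate]
        have h4 := congrArg (fun l => List.count Step.D (l.take (L+1))) h
        simp only [h2, h3] at h4
        simp [List.count_append, List.count_replicate, List.count_cons] at h4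
    · intro h
      exfalso
      have := congrArg List.length h
      rw [pat_length] at this
      simp only [List.length_take, hLlen] at this
      omega

lemma pc_append (r : ℕ) {Q : List Step} (P : List Step) (hQ : IsMotzkin Q) :
    plateauCountR r (Q ++ D :: P) = plateauCountR r Q + plateauCountR r P := by
  rw [pc_eq_sum' r _ (le_of_eq (by simp [List.length_append]) :
      (Q ++ D :: P).length ≤ Q.length + (P.length + 1))]
  rw [sum_range_add]
  congr 1
  · rw [pc_eq_sum]
    refine Finset.sum_congr rfl (fun i hi => ?_)
    simp only [Finset.mem_range] at hi
    rw [if_congr (match_inner hQ hi) rfl rfl]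
  · have hdrop : ∀ i, (Q ++ D :: P).drop (Q.length + i) = (D :: P).drop i := by
      intro i; rw [List.drop_append]
      simp
    simp only [hdrop]
    rw [Finset.sum_range_succ']
    simp only [List.drop_succ_cons, List.drop_zero]
    have h0 : ((D : Step) :: P).take (r+2) ≠ pat r := by
      rw [pat, show r + 2 = (r+1)+1 by ring, List.take_succ_cons]
      simp
    rw [if_neg h0, pc_eq_sum]
    simp

lemma pc_UQDP (r : ℕ) {Q : List Step} (P : List Step) (hQ : IsMotzkin Q) :
    plateauCountR r (U :: (Q ++ D :: P))
      = (if Q = List.replicate r H then 1 else 0)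
        + plateauCountR r Q + plateauCountR r P := by
  rw [pc_cons, pc_append r P hQ, if_congr (take_eq_pat_iff hQ) rfl rfl, add_assoc]

end Step

namespace Step
open Finset

lemma isMotzkin_cons_H {l : List Step} : IsMotzkin (H :: l) ↔ IsMotzkin l := by
  rw [isMotzkin_iff, isMotzkin_iff]
  constructor
  · rintro ⟨h1, h2⟩
    refine ⟨fun k => ?_, ?_⟩
    · have := h1 (k+1)
      rw [List.take_succ_cons, bal_cons] at this
      simpa using this
    · have := h2; rw [bal_cons] at this; simpa using this
  · rintro ⟨h1, h2⟩
    refine ⟨fun k => ?_, ?_⟩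
    · match k with
      | 0 => simp
      | k+1 =>
        rw [List.take_succ_cons, bal_cons]
        have := h1 k; simp; omega
    · rw [bal_cons]; simpa using h2

lemma isMotzkin_UQDP {Q P : List Step} (hQ : IsMotzkin Q) (hP : IsMotzkin P) :
    IsMotzkin (U :: (Q ++ D :: P)) := by
  rw [isMotzkin_iff] at *
  obtain ⟨hQ1, hQ2⟩ := hQ
  obtain ⟨hP1, hP2⟩ := hP
  constructor
  · intro k
    match k with
    | 0 => simp
    | j+1 =>
      rw [List.take_succ_cons, bal_cons]
      simp only [reduceCtorEq, reduceIte]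
      have key : -1 ≤ bal ((Q ++ D :: P).take j) := by
        rw [List.take_append, bal_append]
        have h1 := hQ1 j
        match hj : j - Q.length with
        | 0 => simp only [List.take_zero, bal_nil]; omega
        | m+1 =>
          rw [List.take_succ_cons, bal_cons]
          have := hP1 m
          simp only [reduceCtorEq, if_false, if_pos rfl]
          omega
      omega
  · rw [bal_cons, bal_append, bal_cons]
    simp only [reduceCtorEq, reduceIte]
    omega

lemma exists_decomp {t : List Step} (h : IsMotzkin (U :: t)) :
    ∃ Q P : List Step, t = Q ++ D :: P ∧ IsMotzkin Q ∧ IsMotzkin P := by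
  rw [isMotzkin_iff] at h
  obtain ⟨h1, h2⟩ := h
  have hpre : ∀ m, -1 ≤ bal (t.take m) := by
    intro m
    have := h1 (m+1)
    rw [List.take_succ_cons, bal_cons] at this
    simp at this
    omega
  have hex : bal (t.take t.length) = -1 := by
    rw [List.take_length]
    rw [bal_cons] at h2
    simp at h2
    omega
  have hexists : ∃ n, bal (t.take n) = -1 := ⟨t.length, hex⟩
  set j0 := Nat.find hexists with hj0def
  have hspec : bal (t.take j0) = -1 := Nat.find_spec hexists
  have hmin : ∀ m, m < j0 → bal (t.take m) ≠ -1 := fun m hm => Nat.find_min _ hm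
  have hminpos : ∀ m, m < j0 → 0 ≤ bal (t.take m) := by
    intro m hm
    have := hpre m
    have := hmin m hm
    omega
  have hj0pos : j0 ≠ 0 := by
    intro h0
    rw [h0] at hspec
    simp at hspec
  have hj0le : j0 ≤ t.length := Nat.find_le hex
  obtain ⟨i, hi⟩ : ∃ i, j0 = i + 1 := ⟨j0 - 1, by omega⟩
  have hilen : i < t.length := by omega
  have htake : t.take j0 = t.take i ++ [t[i]] := by
    rw [hi, List.take_succ, List.getElem?_eq_getElem hilen]
    rfl
  have hbal_i : 0 ≤ bal (t.take i) := hminpos i (by omega)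
  have hD : t[i] = D ∧ bal (t.take i) = 0 := by
    rw [htake, bal_append, bal_singleton] at hspec
    rcases hstep : t[i] <;> rw [hstep] at hspec <;> simp at hspec <;> first
      | omega
      | exact ⟨rfl, by omega⟩
  refine ⟨t.take i, t.drop (i+1), ?_, ?_, ?_⟩
  · conv_lhs => rw [← List.take_append_drop i t]
    rw [List.drop_eq_getElem_cons hilen, hD.1]
  · rw [isMotzkin_iff]
    refine ⟨fun k => ?_, hD.2⟩
    rw [List.take_take]
    exact hminpos _ (by omega)
  · rw [isMotzkin_iff]
    have hsplit : ∀ k, bal (t.take (j0 + k)) = -1 + bal ((t.drop (i+1)).take k) := by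
      intro k
      rw [List.take_add, bal_append, hspec, hi]
    constructor
    · intro k
      have := hpre (j0 + k)
      have := hsplit k
      omega
    · have := hsplit (t.length)
      rw [List.take_of_length_le (by omega), List.take_of_length_le (by simp)] at this
      rw [bal_cons] at h2
      simp at h2
      omega

lemma decomp_unique {Q Q' P P' : List Step} (hQ : IsMotzkin Q) (hQ' : IsMotzkin Q')
    (h : Q ++ D :: P = Q' ++ D :: P') : Q = Q' ∧ P = P' := by
  have key : ∀ A A' B B' : List Step, IsMotzkin A → IsMotzkin A' →
      A ++ D :: B = A' ++ D :: B' → ¬ A.length < A'.length := by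
    intro A A' B B' hA hA' heq hlt
    have h2 : (A ++ D :: B).take (A.length + 1) = A ++ [D] := by
      rw [List.take_append, List.take_of_length_le (by omega),
        show A.length + 1 - A.length = 1 by omega]
      simp
    have h3 : (A' ++ D :: B').take (A.length + 1) = A'.take (A.length + 1) :=
      List.take_append_of_le_length (by omega)
    rw [heq, h3] at h2
    have hb := ((isMotzkin_iff A').1 hA').1 (A.length + 1)
    rw [h2, bal_append] at hb
    simp at hb
    have hbalA : bal A = 0 := ((isMotzkin_iff A).1 hA).2
    omega
  have hlen : Q.length = Q'.length := by
    rcases lt_trichotomy Q.length Q'.length with hlt | heq | hgt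
    · exact absurd hlt (key Q Q' P P' hQ hQ' h)
    · exact heq
    · exact absurd hgt (key Q' Q P' P hQ' hQ h.symm)
  obtain ⟨e1, e2⟩ := List.append_inj h hlen
  exact ⟨e1, by simpa using e2⟩

end Step

namespace Step
open Finset

def memP (n u v : ℕ) (l : List Step) : Prop :=
  l.length = n ∧ IsMotzkin l ∧
    (∀ r : ℕ, 3 ≤ r → plateauCountR r l = 0) ∧
    plateauCountR 1 l = u ∧ plateauCountR 2 l = v

def memB (k a c : ℕ) (Q : List Step) : Prop :=
  Q.length = k ∧ IsMotzkin Q ∧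
    (∀ r : ℕ, 3 ≤ r → plateauCountR r Q = 0) ∧
    (∀ j : ℕ, 3 ≤ j → Q ≠ List.replicate j H) ∧
    plateauCountR 1 Q + (if Q = [H] then 1 else 0) = a ∧
    plateauCountR 2 Q + (if Q = [H, H] then 1 else 0) = c

lemma finP (n u v : ℕ) : {l : List Step | memP n u v l}.Finite :=
  Set.Finite.subset (List.finite_length_eq _ n) (fun l hl => hl.1)

lemma finB (k a c : ℕ) : {Q : List Step | memB k a c Q}.Finite :=
  Set.Finite.subset (List.finite_length_eq _ k) (fun l hl => hl.1)

noncomputable def Fn (n u v : ℕ) : Finset (List Step) := (finP n u v).toFinset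
noncomputable def Bf (k a c : ℕ) : Finset (List Step) := (finB k a c).toFinset

@[simp] lemma mem_Fn {n u v : ℕ} {l : List Step} : l ∈ Fn n u v ↔ memP n u v l :=
  Set.Finite.mem_toFinset _

@[simp] lemma mem_Bf {k a c : ℕ} {l : List Step} : l ∈ Bf k a c ↔ memB k a c l :=
  Set.Finite.mem_toFinset _

lemma w_eq (n u v : ℕ) : w n u v = (Fn n u v).card := by
  unfold w
  rw [show {l : List Step // l.length = n ∧ IsMotzkin l ∧
      (∀ r : ℕ, 3 ≤ r → plateauCountR r l = 0) ∧
      plateauCountR 1 l = u ∧ plateauCountR 2 l = v}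
      = ↥{l : List Step | memP n u v l} from rfl]
  rw [Nat.card_coe_set_eq, Set.ncard_eq_toFinset_card _ (finP n u v)]
  rfl

/-! ### small cases -/

lemma isMotzkin_nil : IsMotzkin ([] : List Step) := by
  constructor <;> simp

lemma isMotzkin_replicate_H (k : ℕ) : IsMotzkin (List.replicate k H) := by
  rw [isMotzkin_iff]
  refine ⟨fun j => ?_, by simp⟩
  rw [List.take_replicate]
  simp

lemma pc_replicate (r k : ℕ) : plateauCountR r (List.replicate k H) = 0 := by
  rw [pc_eq_sum]
  refine Finset.sum_eq_zero (fun i _ => ?_)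
  rw [if_neg]
  intro hm
  have := congrArg (List.count U) hm
  rw [List.drop_replicate, List.take_replicate] at this
  simp [pat, List.count_replicate, List.count_cons, List.count_append] at this

lemma eq_singleton_H {l : List Step} (hm : IsMotzkin l) (hl : l.length = 1) : l = [H] := by
  rcases l with _ | ⟨s, _ | ⟨t, l⟩⟩ <;> simp at hl
  rcases s with _ | _ | _
  · exfalso; have := hm.2; revert this; decide
  · rfl
  · exfalso; have := hm.2; revert this; decide

lemma eq_of_length_two {l : List Step} (hm : IsMotzkin l) (hl : l.length = 2) :
    l = [H, H] ∨ l = [U, D] := by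
  rcases l with _ | ⟨s, _ | ⟨t, _ | ⟨x, l⟩⟩⟩ <;> simp at hl
  rcases s with _ | _ | _ <;> rcases t with _ | _ | _ <;>
    first
      | (left; rfl)
      | (right; rfl)
      | (exfalso; have := hm.2; revert this; decide)
      | (exfalso; have := hm.1 1; revert this; decide)

lemma pc_short2 {r : ℕ} (hr : 1 ≤ r) {l : List Step} (hl : l.length ≤ 2) :
    plateauCountR r l = 0 :=
  pc_zero_of_short (by omega)

lemma w0 (u v : ℕ) : w 0 u v = if u = 0 ∧ v = 0 then 1 else 0 := by
  rw [w_eq]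
  split_ifs with h
  · obtain ⟨rfl, rfl⟩ := h
    rw [show Fn 0 0 0 = {([] : List Step)} from ?_, Finset.card_singleton]
    ext l
    simp only [mem_Fn, Finset.mem_singleton, memP]
    constructor
    · rintro ⟨hl, -⟩; exact List.length_eq_zero_iff.1 hl
    · rintro rfl
      refine ⟨rfl, isMotzkin_nil, fun r _ => pc_short2 (by omega) (by simp),
        pc_short2 (by omega) (by simp), pc_short2 (by omega) (by simp)⟩
  · rw [Finset.card_eq_zero]
    ext l
    simp only [mem_Fn, Finset.notMem_empty, iff_false, memP]
    rintro ⟨hl, -, -, hu, hv⟩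
    have hl0 : l = [] := List.length_eq_zero_iff.1 hl
    subst hl0
    rw [pc_short2 (by omega) (by simp)] at hu
    rw [pc_short2 (by omega) (by simp)] at hv
    exact h ⟨hu.symm, hv.symm⟩

lemma w1 (u v : ℕ) : w 1 u v = if u = 0 ∧ v = 0 then 1 else 0 := by
  rw [w_eq]
  split_ifs with h
  · obtain ⟨rfl, rfl⟩ := h
    rw [show Fn 1 0 0 = {([H] : List Step)} from ?_, Finset.card_singleton]
    ext l
    simp only [mem_Fn, Finset.mem_singleton, memP]
    constructor
    · rintro ⟨hl, hm, -⟩; exact eq_singleton_H hm hl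
    · rintro rfl
      refine ⟨rfl, isMotzkin_replicate_H 1, fun r _ => pc_short2 (by omega) (by simp),
        pc_short2 (by omega) (by simp), pc_short2 (by omega) (by simp)⟩
  · rw [Finset.card_eq_zero]
    ext l
    simp only [mem_Fn, Finset.notMem_empty, iff_false, memP]
    rintro ⟨hl, hm, -, hu, hv⟩
    have hl2 : l.length ≤ 2 := by omega
    rw [pc_short2 (by omega) hl2] at hu
    rw [pc_short2 (by omega) hl2] at hv
    exact h ⟨hu.symm, hv.symm⟩

end Step

namespace Step
open Finset

lemma isMotzkin_UD : IsMotzkin [U, D] :=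
  isMotzkin_UQDP (Q := []) (P := []) isMotzkin_nil isMotzkin_nil

lemma memP_HH : memP 2 0 0 [H, H] :=
  ⟨rfl, isMotzkin_replicate_H 2, fun r hr => pc_short2 (by omega) (by simp),
    pc_short2 (by omega) (by simp), pc_short2 (by omega) (by simp)⟩

lemma memP_UD : memP 2 0 0 [U, D] :=
  ⟨rfl, isMotzkin_UD, fun r hr => pc_short2 (by omega) (by simp),
    pc_short2 (by omega) (by simp), pc_short2 (by omega) (by simp)⟩

lemma w2 (u v : ℕ) : w 2 u v = if u = 0 ∧ v = 0 then 2 else 0 := by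
  rw [w_eq]
  split_ifs with h
  · obtain ⟨rfl, rfl⟩ := h
    rw [show Fn 2 0 0 = {[H, H], [U, D]} from ?_]
    · decide
    ext l
    simp only [mem_Fn, Finset.mem_insert, Finset.mem_singleton]
    constructor
    · rintro ⟨hl, hm, -⟩; exact eq_of_length_two hm hl
    · rintro (rfl | rfl)
      · exact memP_HH
      · exact memP_UD
  · rw [Finset.card_eq_zero]
    ext l
    simp only [mem_Fn, Finset.notMem_empty, iff_false]
    rintro ⟨hl, hm, -, hu, hv⟩
    have hl2 : l.length ≤ 2 := by omega
    rw [pc_short2 (by omega) hl2] at hu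
    rw [pc_short2 (by omega) hl2] at hv
    exact h ⟨hu.symm, hv.symm⟩

lemma ne_replicate_small {Q : List Step} (hQ : Q.length ≤ 2) :
    ∀ j : ℕ, 3 ≤ j → Q ≠ List.replicate j H := by
  intro j hj hrep
  have := congrArg List.length hrep
  simp at this
  omega

lemma b0 (a c : ℕ) : (Bf 0 a c).card = if a = 0 ∧ c = 0 then 1 else 0 := by
  split_ifs with h
  · obtain ⟨rfl, rfl⟩ := h
    rw [show Bf 0 0 0 = {([] : List Step)} from ?_, Finset.card_singleton]
    ext l
    simp only [mem_Bf, Finset.mem_singleton]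
    constructor
    · rintro ⟨hl, -⟩; exact List.length_eq_zero_iff.1 hl
    · rintro rfl
      refine ⟨rfl, isMotzkin_nil, fun r _ => pc_short2 (by omega) (by simp),
        ne_replicate_small (by simp), ?_, ?_⟩ <;>
        rw [pc_short2 (by omega) (by simp)] <;> simp
  · rw [Finset.card_eq_zero]
    ext l
    simp only [mem_Bf, Finset.notMem_empty, iff_false]
    rintro ⟨hl, -, -, -, hu, hv⟩
    have hl0 : l = [] := List.length_eq_zero_iff.1 hl
    subst hl0
    rw [pc_short2 (by omega) (by simp)] at hu
    rw [pc_short2 (by omega) (by simp)] at hv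
    simp at hu hv
    exact h ⟨hu.symm, hv.symm⟩

lemma b1 (a c : ℕ) : (Bf 1 a c).card = if a = 1 ∧ c = 0 then 1 else 0 := by
  split_ifs with h
  · obtain ⟨rfl, rfl⟩ := h
    rw [show Bf 1 1 0 = {([H] : List Step)} from ?_, Finset.card_singleton]
    ext l
    simp only [mem_Bf, Finset.mem_singleton]
    constructor
    · rintro ⟨hl, hm, -⟩; exact eq_singleton_H hm hl
    · rintro rfl
      refine ⟨rfl, isMotzkin_replicate_H 1, fun r _ => pc_short2 (by omega) (by simp),
        ne_replicate_small (by simp), ?_, ?_⟩ <;>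
        rw [pc_short2 (by omega) (by simp)] <;> simp
  · rw [Finset.card_eq_zero]
    ext l
    simp only [mem_Bf, Finset.notMem_empty, iff_false]
    rintro ⟨hl, hm, -, -, hu, hv⟩
    have hl1 : l = [H] := eq_singleton_H hm hl
    subst hl1
    rw [pc_short2 (by omega) (by simp)] at hu
    rw [pc_short2 (by omega) (by simp)] at hv
    simp at hu hv
    exact h ⟨hu.symm, hv.symm⟩

lemma b2 (a c : ℕ) :
    (Bf 2 a c).card = if (a = 0 ∧ c = 0) ∨ (a = 0 ∧ c = 1) then 1 else 0 := by
  have hmem : ∀ l, l ∈ Bf 2 a c ↔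
      ((l = [U, D] ∧ a = 0 ∧ c = 0) ∨ (l = [H, H] ∧ a = 0 ∧ c = 1)) := by
    intro l
    simp only [mem_Bf]
    constructor
    · rintro ⟨hl, hm, -, -, hu, hv⟩
      have hl2 : l.length ≤ 2 := by omega
      rw [pc_short2 (by omega) hl2] at hu
      rw [pc_short2 (by omega) hl2] at hv
      rcases eq_of_length_two hm hl with rfl | rfl
      · right; simp at hu hv ⊢; exact ⟨hu.symm, hv.symm⟩
      · left; simp at hu hv ⊢; exact ⟨hu.symm, hv.symm⟩
    · rintro (⟨rfl, rfl, rfl⟩ | ⟨rfl, rfl, rfl⟩)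
      · refine ⟨rfl, isMotzkin_UD, fun r _ => pc_short2 (by omega) (by simp),
          ne_replicate_small (by simp), ?_, ?_⟩ <;>
          rw [pc_short2 (by omega) (by simp)] <;> simp
      · refine ⟨rfl, isMotzkin_replicate_H 2, fun r _ => pc_short2 (by omega) (by simp),
          ne_replicate_small (by simp), ?_, ?_⟩ <;>
          rw [pc_short2 (by omega) (by simp)] <;> simp
  split_ifs with h
  · rcases h with ⟨rfl, rfl⟩ | ⟨rfl, rfl⟩
    · rw [show Bf 2 0 0 = {[U, D]} from by ext l; rw [hmem]; simp, Finset.card_singleton]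
    · rw [show Bf 2 0 1 = {[H, H]} from by ext l; rw [hmem]; simp, Finset.card_singleton]
  · rw [Finset.card_eq_zero]
    ext l
    rw [hmem]
    simp only [Finset.notMem_empty, iff_false]
    rintro (⟨-, rfl, rfl⟩ | ⟨-, rfl, rfl⟩) <;> exact h (by simp)

lemma memP_replicate (k : ℕ) : memP k 0 0 (List.replicate k H) :=
  ⟨by simp, isMotzkin_replicate_H k, fun r _ => pc_replicate r k,
    pc_replicate 1 k, pc_replicate 2 k⟩

lemma bk {k : ℕ} (hk : 3 ≤ k) (a c : ℕ) :
    ((Bf k a c).card : ℚ) = (w k a c : ℚ) - (if a = 0 ∧ c = 0 then 1 else 0) := by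
  have hlen2 : ∀ {Q : List Step}, Q.length = k → (Q ≠ [H] ∧ Q ≠ [H, H]) := by
    intro Q hQ
    constructor <;> (rintro rfl; simp at hQ; omega)
  have hBf : Bf k a c = (Fn k a c).erase (List.replicate k H) := by
    ext Q
    simp only [mem_Bf, mem_Fn, Finset.mem_erase, memB, memP]
    constructor
    · rintro ⟨hl, hm, hbig, hrep, hu, hv⟩
      rw [if_neg (hlen2 hl).1] at hu
      rw [if_neg (hlen2 hl).2] at hv
      simp only [Nat.add_zero] at hu hv
      exact ⟨hrep k hk, hl, hm, hbig, hu, hv⟩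
    · rintro ⟨hne, hl, hm, hbig, hu, hv⟩
      refine ⟨hl, hm, hbig, fun j hj hrep => hne ?_, ?_, ?_⟩
      · have hjk := congrArg List.length hrep
        rw [hl] at hjk
        simp only [List.length_replicate] at hjk
        rw [hrep, hjk]
      · rw [if_neg (hlen2 hl).1]; simpa using hu
      · rw [if_neg (hlen2 hl).2]; simpa using hv
  rw [hBf, w_eq]
  split_ifs with h
  · obtain ⟨rfl, rfl⟩ := h
    have hmem : List.replicate k H ∈ Fn k 0 0 := mem_Fn.2 (memP_replicate k)
    rw [Finset.card_erase_of_mem hmem]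
    rw [Nat.cast_sub (Finset.card_pos.2 ⟨_, hmem⟩)]
    simp
  · rw [Finset.erase_eq_of_notMem, sub_zero]
    intro hmem
    obtain ⟨-, -, -, hu, hv⟩ := mem_Fn.1 hmem
    rw [pc_replicate] at hu hv
    exact h ⟨hu.symm, hv.symm⟩
end Step

namespace Step
open Finset

lemma pc_cons_H (r : ℕ) (P : List Step) :
    plateauCountR r (H :: P) = plateauCountR r P := by
  rw [pc_cons, if_neg, zero_add]
  simp [pat]

lemma memP_cons_H {n u v : ℕ} {P : List Step} (hn : 1 ≤ n) :
    memP n u v (H :: P) ↔ memP (n-1) u v P := by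
  unfold memP
  simp only [pc_cons_H, isMotzkin_cons_H, List.length_cons]
  constructor
  · rintro ⟨h1, h⟩; exact ⟨by omega, h⟩
  · rintro ⟨h1, h⟩; exact ⟨by omega, h⟩

lemma not_memP_cons_D {n u v : ℕ} {t : List Step} : ¬ memP n u v (D :: t) := by
  rintro ⟨-, hm, -⟩
  have := hm.1 1
  simp [List.count_cons] at this

/-- the index finset -/
def I (n u v : ℕ) : Finset ((ℕ × ℕ) × (ℕ × ℕ) × (ℕ × ℕ)) :=
  antidiagonal (n-2) ×ˢ (antidiagonal u ×ˢ antidiagonal v)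

/-- the gluing map -/
def g (qp : List Step × List Step) : List Step := U :: (qp.1 ++ D :: qp.2)

lemma main_decomp {n : ℕ} (hn : 2 ≤ n) (u v : ℕ) :
    Fn n u v = (Fn (n-1) u v).image (H :: ·)
      ∪ (I n u v).biUnion (fun t =>
          ((Bf t.1.1 t.2.1.1 t.2.2.1) ×ˢ Fn t.1.2 t.2.1.2 t.2.2.2).image g) := by
  ext l
  simp only [Finset.mem_union, Finset.mem_image, Finset.mem_biUnion, mem_Fn,
    Finset.mem_product, mem_Bf, I, Finset.mem_product, Finset.HasAntidiagonal.mem_antidiagonal]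
  constructor
  · intro hl
    match l with
    | [] => exact absurd hl.1 (by simp; omega)
    | D :: t => exact absurd hl not_memP_cons_D
    | Step.H :: t =>
      left
      exact ⟨t, (memP_cons_H (by omega)).1 hl, rfl⟩
    | Step.U :: t =>
      right
      obtain ⟨hlen, hm, hbig, hu, hv⟩ := hl
      obtain ⟨Q, P, rfl, hQ, hP⟩ := exists_decomp hm
      have hpc : ∀ r, plateauCountR r (U :: (Q ++ D :: P))
          = (if Q = List.replicate r H then 1 else 0)
            + plateauCountR r Q + plateauCountR r P := fun r => pc_UQDP r P hQ
      have hbigQ : ∀ r, 3 ≤ r → plateauCountR r Q = 0 := by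
        intro r hr; have := hbig r hr; rw [hpc r] at this; omega
      have hbigP : ∀ r, 3 ≤ r → plateauCountR r P = 0 := by
        intro r hr; have := hbig r hr; rw [hpc r] at this; omega
      have hrep : ∀ j, 3 ≤ j → Q ≠ List.replicate j H := by
        intro j hj hcon
        have := hbig j hj
        rw [hpc j, if_pos hcon] at this
        omega
      have hu' := hu; rw [hpc 1] at hu'
      have hv' := hv; rw [hpc 2] at hv'
      have hrep1 : List.replicate 1 H = [H] := rfl
      have hrep2 : List.replicate 2 H = [H, H] := rfl
      rw [hrep1] at hu'
      rw [hrep2] at hv'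
      refine ⟨((Q.length, P.length),
        ((plateauCountR 1 Q + (if Q = [H] then 1 else 0), plateauCountR 1 P),
         (plateauCountR 2 Q + (if Q = [H, H] then 1 else 0), plateauCountR 2 P))),
        ⟨?_, ?_, ?_⟩, ⟨Q, P⟩, ⟨⟨rfl, hQ, hbigQ, hrep, rfl, rfl⟩,
          ⟨rfl, hP, hbigP, rfl, rfl⟩⟩, rfl⟩
      · show Q.length + P.length = n - 2
        simp only [List.length_cons, List.length_append, List.length_cons] at hlen
        omega
      · show plateauCountR 1 Q + (if Q = [H] then 1 else 0) + plateauCountR 1 P = u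
        omega
      · show plateauCountR 2 Q + (if Q = [H, H] then 1 else 0) + plateauCountR 2 P = v
        omega
  · rintro (⟨P, hP, rfl⟩ | ⟨t, ⟨hlen, hu, hv⟩, ⟨Q, P⟩, ⟨hQmem, hPmem⟩, rfl⟩)
    · exact (memP_cons_H (by omega)).2 hP
    · obtain ⟨hQlen, hQ, hbigQ, hrepQ, hQu, hQv⟩ := hQmem
      obtain ⟨hPlen, hP, hbigP, hPu, hPv⟩ := hPmem
      dsimp only at hQlen hQ hbigQ hrepQ hQu hQv hPlen hP hbigP hPu hPv hlen hu hv
      have hpc : ∀ r, plateauCountR r (g (Q, P))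
          = (if Q = List.replicate r H then 1 else 0)
            + plateauCountR r Q + plateauCountR r P := fun r => pc_UQDP r P hQ
      refine ⟨?_, isMotzkin_UQDP hQ hP, ?_, ?_, ?_⟩
      · show (U :: (Q ++ D :: P)).length = n
        simp only [List.length_cons, List.length_append, List.length_cons]
        omega
      · intro r hr
        rw [hpc r, if_neg (hrepQ r hr), hbigQ r hr, hbigP r hr]
      · rw [hpc 1, show List.replicate 1 H = [H] from rfl]
        omega
      · rw [hpc 2, show List.replicate 2 H = [H, H] from rfl]
        omega

lemma main_card {n : ℕ} (hn : 2 ≤ n) (u v : ℕ) :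
    w n u v = w (n-1) u v
      + ∑ p ∈ antidiagonal (n-2), ∑ q ∈ antidiagonal u, ∑ s ∈ antidiagonal v,
          (Bf p.1 q.1 s.1).card * w p.2 q.2 s.2 := by
  have hdisj : Disjoint ((Fn (n-1) u v).image (H :: ·))
      ((I n u v).biUnion (fun t =>
        ((Bf t.1.1 t.2.1.1 t.2.2.1) ×ˢ Fn t.1.2 t.2.1.2 t.2.2.2).image g)) := by
    rw [Finset.disjoint_left]
    rintro x hx hx'
    obtain ⟨P, -, rfl⟩ := Finset.mem_image.1 hx
    obtain ⟨t, -, ht⟩ := Finset.mem_biUnion.1 hx'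
    obtain ⟨⟨Q, P'⟩, -, hg⟩ := Finset.mem_image.1 ht
    simp [g] at hg
  have hpair : ∀ t₁ ∈ I n u v, ∀ t₂ ∈ I n u v, t₁ ≠ t₂ →
      Disjoint (((Bf t₁.1.1 t₁.2.1.1 t₁.2.2.1) ×ˢ Fn t₁.1.2 t₁.2.1.2 t₁.2.2.2).image g)
        (((Bf t₂.1.1 t₂.2.1.1 t₂.2.2.1) ×ˢ Fn t₂.1.2 t₂.2.1.2 t₂.2.2.2).image g) := by
    intro t₁ _ t₂ _ hne
    rw [Finset.disjoint_left]
    rintro x hx hx'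
    obtain ⟨⟨Q, P⟩, hmem, rfl⟩ := Finset.mem_image.1 hx
    obtain ⟨⟨Q', P'⟩, hmem', hg⟩ := Finset.mem_image.1 hx'
    rw [Finset.mem_product] at hmem hmem'
    obtain ⟨hQ1, hP1⟩ := hmem
    obtain ⟨hQ2, hP2⟩ := hmem'
    simp only [g, List.cons.injEq, true_and] at hg
    obtain ⟨rfl, rfl⟩ := decomp_unique (mem_Bf.1 hQ2).2.1 (mem_Bf.1 hQ1).2.1 hg
    apply hne
    obtain ⟨e1, e2, e3, e4, e5, e6⟩ := mem_Bf.1 hQ1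
    obtain ⟨f1, f2, f3, f4, f5, f6⟩ := mem_Bf.1 hQ2
    obtain ⟨e1', -, -, e5', e6'⟩ := mem_Fn.1 hP1
    obtain ⟨f1', -, -, f5', f6'⟩ := mem_Fn.1 hP2
    have : t₁.1.1 = t₂.1.1 := by rw [← e1, ← f1]
    have : t₁.1.2 = t₂.1.2 := by rw [← e1', ← f1']
    have : t₁.2.1.1 = t₂.2.1.1 := by rw [← e5, ← f5]
    have : t₁.2.1.2 = t₂.2.1.2 := by rw [← e5', ← f5']
    have : t₁.2.2.1 = t₂.2.2.1 := by rw [← e6, ← f6]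
    have : t₁.2.2.2 = t₂.2.2.2 := by rw [← e6', ← f6']
    ext <;> assumption
  rw [w_eq, main_decomp hn u v, Finset.card_union_of_disjoint hdisj,
    Finset.card_image_of_injective _ (fun a b h => by simpa using h),
    Finset.card_biUnion hpair, ← w_eq]
  congr 1
  rw [I, Finset.sum_product]
  refine Finset.sum_congr rfl (fun p _ => ?_)
  rw [Finset.sum_product]
  refine Finset.sum_congr rfl (fun q _ => ?_)
  refine Finset.sum_congr rfl (fun s _ => ?_)
  rw [Finset.card_image_of_injOn, Finset.card_product, w_eq]
  rintro ⟨Q, P⟩ hmem ⟨Q', P'⟩ hmem' hg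
  rw [Finset.mem_coe, Finset.mem_product] at hmem hmem'
  simp only [g, List.cons.injEq, true_and] at hg
  obtain ⟨rfl, rfl⟩ := decomp_unique (mem_Bf.1 hmem.1).2.1 (mem_Bf.1 hmem'.1).2.1 hg
  rfl

end Step

namespace Step
open Finset PowerSeries

abbrev R2 := PowerSeries (PowerSeries ℚ)

noncomputable def Wc (n : ℕ) : R2 := PowerSeries.mk fun u => PowerSeries.mk fun v => (w n u v : ℚ)
noncomputable def Qc (k : ℕ) : R2 := PowerSeries.mk fun a => PowerSeries.mk fun c => ((Bf k a c).card : ℚ)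
noncomputable def Gs : PowerSeries R2 := PowerSeries.mk Wc
noncomputable def Qs : PowerSeries R2 := PowerSeries.mk Qc
noncomputable def Ss : PowerSeries R2 := PowerSeries.mk fun k => if 3 ≤ k then 1 else 0

lemma R2ext {f g : ℕ → ℕ → ℚ} (h : ∀ a c, f a c = g a c) :
    (PowerSeries.mk fun a => PowerSeries.mk fun c => f a c)
      = (PowerSeries.mk fun a => PowerSeries.mk fun c => g a c) := by
  apply PowerSeries.ext; intro a
  rw [coeff_mk, coeff_mk]
  apply PowerSeries.ext; intro c
  rw [coeff_mk, coeff_mk]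
  exact h a c

lemma indicator_eq_one :
    (PowerSeries.mk fun a => PowerSeries.mk fun c => (if a = 0 ∧ c = 0 then (1:ℚ) else 0)) = 1 := by
  apply PowerSeries.ext; intro a
  rw [coeff_mk, coeff_one]
  split_ifs with h
  · subst h
    apply PowerSeries.ext; intro c
    rw [coeff_mk, coeff_one]
    split_ifs with h2 h3 h4 <;> simp_all
  · apply PowerSeries.ext; intro c
    rw [coeff_mk]
    split_ifs with h2 <;> simp_all

lemma Wc0 : Wc 0 = 1 := by
  rw [Wc, ← indicator_eq_one]
  exact R2ext (fun a c => by rw [w0]; split_ifs <;> simp)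

lemma Wc1 : Wc 1 = 1 := by
  rw [Wc, ← indicator_eq_one]
  exact R2ext (fun a c => by rw [w1]; split_ifs <;> simp)

lemma Wrec (m : ℕ) :
    Wc (m+2) = Wc (m+1) + ∑ p ∈ antidiagonal m, Qc p.1 * Wc p.2 := by
  apply PowerSeries.ext; intro a
  rw [map_add, map_sum]
  simp only [coeff_mul]
  apply PowerSeries.ext; intro c
  rw [map_add]
  simp only [map_sum, coeff_mul, Wc, Qc, coeff_mk]
  have hmc := main_card (n := m + 2) (by omega) a c
  simp only [show m + 2 - 1 = m + 1 from rfl, show m + 2 - 2 = m from rfl] at hmc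
  exact_mod_cast hmc

lemma Grec : Gs = 1 + X * Gs + X^2 * (Qs * Gs) := by
  have hx0 : ∀ φ : PowerSeries R2, (coeff 0) (X * φ) = 0 := by
    intro φ
    rw [PowerSeries.coeff_zero_eq_constantCoeff, map_mul]
    simp
  have hxx : (X:PowerSeries R2)^2 * (Qs * Gs) = X * (X * (Qs*Gs)) := by ring
  apply PowerSeries.ext; intro n
  rcases n with _ | _ | m
  · rw [map_add, map_add, hx0, hxx, hx0, coeff_one]
    simp [Gs, coeff_mk, Wc0]
  · rw [map_add, map_add, coeff_succ_X_mul, hxx, coeff_succ_X_mul, hx0, coeff_one]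
    simp only [Gs, coeff_mk]
    rw [Wc1, Wc0]
    simp
  · rw [map_add, map_add, coeff_succ_X_mul, hxx, coeff_succ_X_mul, coeff_succ_X_mul,
      coeff_one, if_neg (by omega), coeff_mul]
    simp only [Gs, Qs, coeff_mk]
    rw [Wrec m]
    ring

lemma Qcoeff (n a c : ℕ) :
    ((Bf n a c).card : ℚ) = (w n a c : ℚ)
      + (if n = 1 ∧ a = 1 ∧ c = 0 then 1 else 0)
      - (if n = 1 ∧ a = 0 ∧ c = 0 then 1 else 0)
      + (if n = 2 ∧ a = 0 ∧ c = 1 then 1 else 0)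
      - (if n = 2 ∧ a = 0 ∧ c = 0 then 1 else 0)
      - (if 3 ≤ n ∧ a = 0 ∧ c = 0 then 1 else 0) := by
  rcases n with _ | _ | _ | k
  · rw [b0, w0]; split_ifs <;> simp_all
  · rw [b1, w1]; split_ifs <;> simp_all
  · rw [b2, w2]; split_ifs <;> simp_all <;> norm_num
  · rw [bk (by omega)]
    split_ifs <;> simp_all
end Step

namespace Step
open Finset PowerSeries

set_option maxHeartbeats 1000000 in
lemma Qev : Qs = Gs + X * C X - X + X^2 * C (C X) - X^2 - Ss := by
  apply PowerSeries.ext; intro n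
  rw [map_sub, map_sub, map_add, map_sub, map_add]
  rw [mul_comm (X : PowerSeries R2) (C X),
    mul_comm ((X : PowerSeries R2)^2) (C (C X))]
  rw [coeff_C_mul, coeff_C_mul, coeff_X_pow]
  simp only [Qs, Gs, Ss, coeff_mk, coeff_X, mul_ite, mul_one, mul_zero]
  apply PowerSeries.ext; intro a
  simp only [map_add, map_sub, apply_ite (coeff a), map_zero, coeff_X,
    coeff_one, Wc, Qc, coeff_mk, coeff_C]
  apply PowerSeries.ext; intro c
  simp only [map_add, map_sub, apply_ite (coeff c), map_zero, coeff_X, coeff_one,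
    coeff_mk, coeff_C]
  rw [Qcoeff n a c]
  simp only [← ite_and]

lemma Sval : ((1 : PowerSeries R2) - X) * Ss = X^3 := by
  have hx0 : ∀ φ : PowerSeries R2, (coeff 0) (X * φ) = 0 := by
    intro φ
    rw [PowerSeries.coeff_zero_eq_constantCoeff, map_mul]
    simp
  apply PowerSeries.ext; intro n
  rw [sub_mul, one_mul, map_sub, coeff_X_pow]
  rcases n with _ | k
  · rw [hx0]
    simp [Ss, coeff_mk]
  · rw [coeff_succ_X_mul]
    simp only [Ss, coeff_mk]
    split_ifs <;> first | (exfalso; omega) | simp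

end Step

open PowerSeries in
/-- Working in `ℚ[[x,y,z]]` realized as `((ℚ[[z]])[[y]])[[x]]`: the outermost
variable is `x`, then `y`, then `z`.  `G` is the generating function for Motzkin
paths with no plateau of length three or more, where UHDs are weighted by `y`
and UHHDs by `z`. -/
theorem bounded_plateau_gf
    (G : PowerSeries (PowerSeries (PowerSeries ℚ)))
    (hG : G = PowerSeries.mk fun n => PowerSeries.mk fun u => PowerSeries.mk fun v =>
      (w n u v : ℚ)) :
    (1 - X) * (G - 1 - X * G)
      = X ^ 2 * G *
        ((1 - X) * (G + X * PowerSeries.C (R := PowerSeries (PowerSeries ℚ)) X - X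
            + X ^ 2 * PowerSeries.C (R := PowerSeries (PowerSeries ℚ))
                (PowerSeries.C (R := PowerSeries ℚ) X) - X ^ 2)
          - X ^ 3) := by
  have hGG : G = Step.Gs := by rw [hG]; rfl
  subst hGG
  have hK : Step.Gs - 1 - X * Step.Gs = X^2 * (Step.Qs * Step.Gs) := by
    linear_combination Step.Grec
  have hQ := Step.Qev
  have hS := Step.Sval
  linear_combination (1 - (X : PowerSeries Step.R2)) * hK
    + (1 - (X : PowerSeries Step.R2)) * X^2 * Step.Gs * hQ - X^2 * Step.Gs * hS
end
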